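/- arXiv:2210.15895 — 6 statements merged into one kernel-verified Lean document; each statement's English description precedes it below -/
import Mathlib

section
/- Let h : [0,∞)×[0,∞) → ℝ be C¹ in r and suppose |∂h/∂r(u,r)| ≤ x/(1+r+u)³ for all u,r ≥ 0, where x > 0. Then the radial average h̄(u,r) = (1/r)∫₀ʳ h(u,s) ds satisfies |h(u,r) − h̄(u,r)| ≤ x·r/(2(1+r+u)²(1+u)) for all u ≥ 0 and r > 0. -/
/-! The radial derivative bound integrates to
`|h(u,r) - h(u,s)| ≤ x/(2(1+u+s)²) - x/(2(1+u+r)²)` for `s ≤ r`, and averaging this bound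
over `s ∈ [0, r]` gives exactly `x r / (2(1+r+u)²(1+u))`. -/

noncomputable section
open Real Set MeasureTheory

/-- Radial average `h̄(u,r) = (1/r)∫₀ʳ h(u,s) ds`. -/
def hbar (h : ℝ → ℝ → ℝ) (u r : ℝ) : ℝ := (1 / r) * ∫ s in (0:ℝ)..r, h u s

theorem abs_sub_le_sub_of_abs_deriv_le {f f' Φ φ : ℝ → ℝ} {a b : ℝ} (hab : a ≤ b)
    (hf : ∀ t ∈ Icc a b, HasDerivAt f (f' t) t) (hΦ : ∀ t ∈ Icc a b, HasDerivAt Φ (φ t) t)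
    (hle : ∀ t ∈ Icc a b, |f' t| ≤ φ t) : |f b - f a| ≤ Φ b - Φ a := by
  refine image_norm_le_of_norm_deriv_right_le_deriv_boundary' (f := fun t => f t - f a)
    (B := fun t => Φ t - Φ a) (fun t ht => ((hf t ht).sub_const _).continuousAt.continuousWithinAt)
    (fun t ht => ((hf t (Ico_subset_Icc_self ht)).sub_const _).hasDerivWithinAt)
    (by simp) (fun t ht => ((hΦ t ht).sub_const _).continuousAt.continuousWithinAt)
    (fun t ht => ((hΦ t (Ico_subset_Icc_self ht)).sub_const _).hasDerivWithinAt)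
    (fun t ht => hle t (Ico_subset_Icc_self ht)) (right_mem_Icc.2 hab)

theorem abs_sub_average_le {f g : ℝ → ℝ} {r : ℝ} (hr : 0 < r)
    (hf : IntervalIntegrable f volume 0 r) (hg : IntervalIntegrable g volume 0 r)
    (hfg : ∀ s ∈ Ioc 0 r, |f r - f s| ≤ g s) :
    |f r - (1 / r) * ∫ s in (0:ℝ)..r, f s| ≤ (1 / r) * ∫ s in (0:ℝ)..r, g s := by
  have hrep : f r - (1 / r) * ∫ s in (0:ℝ)..r, f s = (1 / r) * ∫ s in (0:ℝ)..r, (f r - f s) := by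
    rw [intervalIntegral.integral_sub intervalIntegrable_const hf, intervalIntegral.integral_const]
    field_simp
    ring
  rw [hrep, abs_mul, abs_of_pos (one_div_pos.2 hr)]
  gcongr
  exact intervalIntegral.norm_integral_le_of_norm_le (f := fun s => f r - f s) hr.le
    (ae_of_all _ hfg) hg

theorem hasDerivAt_neg_div_two_mul_sq {x c t : ℝ} (h : c + t ≠ 0) :
    HasDerivAt (fun s => -x / (2 * (c + s) ^ 2)) (x / (c + t) ^ 3) t := by
  have hsq := (((hasDerivAt_id t).const_add c).pow 2).const_mul 2
  refine ((hasDerivAt_const t (-x)).div hsq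
    (mul_ne_zero two_ne_zero (pow_ne_zero 2 h))).congr_deriv ?_
  simp only [id, Pi.pow_apply]
  field_simp
  ring

theorem intervalIntegrable_div_sq_sub_div_sq {x c r : ℝ} (hc : 0 < c) (hr : 0 ≤ r) :
    IntervalIntegrable (fun s => x / (2 * (c + s) ^ 2) - x / (2 * (c + r) ^ 2)) volume 0 r := by
  refine ((continuousOn_const.div (by fun_prop) fun s hs => ?_).sub
    continuousOn_const).intervalIntegrable
  rw [uIcc_of_le hr] at hs
  have := hs.1
  positivity

theorem integral_div_sq_sub_div_sq {x c r : ℝ} (hc : 0 < c) (hr : 0 ≤ r) :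
    ∫ s in (0:ℝ)..r, (x / (2 * (c + s) ^ 2) - x / (2 * (c + r) ^ 2)) =
      x * r ^ 2 / (2 * c * (c + r) ^ 2) := by
  have hpos : ∀ s ∈ uIcc 0 r, 0 < c + s := fun s hs => by
    rw [uIcc_of_le hr] at hs
    linarith [hs.1]
  have hderiv : ∀ s ∈ uIcc 0 r,
      HasDerivAt (fun s => -x / (2 * (c + s)) - x * s / (2 * (c + r) ^ 2))
        (x / (2 * (c + s) ^ 2) - x / (2 * (c + r) ^ 2)) s := fun s hs => by
    have hcs := (hpos s hs).ne'
    have hlin := ((hasDerivAt_id s).const_add c).const_mul 2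
    refine (((hasDerivAt_const s (-x)).div hlin (by positivity)).sub
      (((hasDerivAt_id s).const_mul x).div_const _)).congr_deriv ?_
    simp only [id]
    field_simp
    ring
  rw [intervalIntegral.integral_eq_sub_of_hasDerivAt hderiv
    (intervalIntegrable_div_sq_sub_div_sq hc hr)]
  have := hpos r right_mem_uIcc
  field_simp
  ring

theorem deviation_from_average_bound_general
    (h h' : ℝ → ℝ → ℝ) (x : ℝ)
    (hdiff : ∀ u : ℝ, 0 ≤ u → ∀ r : ℝ, 0 ≤ r →
      HasDerivAt (fun r' => h u r') (h' u r) r)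
    (hbound : ∀ u : ℝ, 0 ≤ u → ∀ r : ℝ, 0 ≤ r → |h' u r| ≤ x / (1 + r + u) ^ 3) :
    ∀ u : ℝ, 0 ≤ u → ∀ r : ℝ, 0 < r →
      |h u r - hbar h u r| ≤ x * r / (2 * (1 + r + u) ^ 2 * (1 + u)) := by
  intro u hu r hr
  have hcont : ContinuousOn (h u) (uIcc 0 r) := fun t ht =>
    (hdiff u hu t (by rw [uIcc_of_le hr.le] at ht; exact ht.1)).continuousAt.continuousWithinAt
  have hpointwise : ∀ s ∈ Ioc 0 r,
      |h u r - h u s| ≤ x / (2 * (1 + u + s) ^ 2) - x / (2 * (1 + u + r) ^ 2) := fun s hs =>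
    (abs_sub_le_sub_of_abs_deriv_le hs.2 (fun t ht => hdiff u hu t (hs.1.le.trans ht.1))
      (fun t ht => hasDerivAt_neg_div_two_mul_sq (x := x) (c := 1 + u) (by linarith [hs.1, ht.1]))
      (fun t ht => by rw [add_right_comm]; exact hbound u hu t (hs.1.le.trans ht.1))).trans_eq
      (by ring)
  calc |h u r - hbar h u r|
      ≤ (1 / r) * ∫ s in (0:ℝ)..r, (x / (2 * (1 + u + s) ^ 2) - x / (2 * (1 + u + r) ^ 2)) :=
        abs_sub_average_le hr hcont.intervalIntegrable
          (intervalIntegrable_div_sq_sub_div_sq (by linarith) hr.le) hpointwise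
    _ = x * r / (2 * (1 + r + u) ^ 2 * (1 + u)) := by
        rw [integral_div_sq_sub_div_sq (by linarith) hr.le]
        field_simp
        ring

/-- **Bound on the deviation from the radial average.** If `h` is C¹ in `r` with
radial derivative `h'` satisfying `|h'(u,r)| ≤ x/(1+r+u)³` for all `u,r ≥ 0`, then
`|h(u,r) − h̄(u,r)| ≤ x·r/(2(1+r+u)²(1+u))` for `u ≥ 0`, `r > 0`. -/
theorem deviation_from_average_bound
    (h h' : ℝ → ℝ → ℝ) (x : ℝ) (hx : 0 < x)
    (hdiff : ∀ u : ℝ, 0 ≤ u → ∀ r : ℝ, 0 ≤ r →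
      HasDerivAt (fun r' => h u r') (h' u r) r)
    (hbound : ∀ u : ℝ, 0 ≤ u → ∀ r : ℝ, 0 ≤ r → |h' u r| ≤ x / (1 + r + u) ^ 3) :
    ∀ u : ℝ, 0 ≤ u → ∀ r : ℝ, 0 < r →
      |h u r - hbar h u r| ≤ x * r / (2 * (1 + r + u) ^ 2 * (1 + u)) :=
  deviation_from_average_bound_general h h' x hdiff hbound
end
end

section
/- Fix u ≥ 0 and x > 0, and let w : (0,∞) → ℝ be measurable with |w(s)| ≤ x·s/(2(1+s+u)²(1+u)) for all s > 0. Then ∫₀^∞ [w(s)²/s + 2·w(s)⁴/s³] ds ≤ (x² + x⁴)/24. -/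
/-!
Since `u ≥ 0`, the hypothesis gives `|w s| ≤ c s` with `c = x / (2 (1 + s)²)`, so the integrand is
at most `c² s + 2 c⁴ s = x²/4 · s/(1+s)⁴ + x⁴/8 · s/(1+s)⁸`. Both terms integrate explicitly:
`s/(1+s)^(k+2)` is the derivative of `-(1+s)^(-k)/k + (1+s)^(-(k+1))/(k+1)`, so its integral over
`(0, ∞)` is `1/k - 1/(k+1)`. This bounds the integral by `x²/24 + x⁴/336`.
-/

noncomputable section
open Real Set MeasureTheory Filter Topology

lemma hasDerivAt_antideriv_div_one_add_pow {k : ℕ} (hk : k ≠ 0) {s : ℝ} (hs : 0 ≤ s) :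
    HasDerivAt (fun t : ℝ => -((1 + t) ^ k)⁻¹ / k + ((1 + t) ^ (k + 1))⁻¹ / (k + 1))
      (s / (1 + s) ^ (k + 2)) s := by
  have hs1 : 1 + s ≠ 0 := by positivity
  have hinv (n : ℕ) : HasDerivAt (fun t : ℝ => ((1 + t) ^ n)⁻¹)
      (-(n * (1 + s) ^ (n - 1) * 1) / ((1 + s) ^ n) ^ 2) s :=
    (((hasDerivAt_id s).const_add 1).pow n).inv (pow_ne_zero n hs1)
  refine (((hinv k).neg.div_const (k : ℝ)).add
    ((hinv (k + 1)).div_const ((k : ℝ) + 1))).congr_deriv ?_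
  obtain ⟨m, rfl⟩ := Nat.exists_eq_add_one_of_ne_zero hk
  simp only [Nat.add_sub_cancel]
  push_cast
  field_simp
  ring

lemma tendsto_antideriv_div_one_add_pow {k : ℕ} (hk : k ≠ 0) :
    Tendsto (fun t : ℝ => -((1 + t) ^ k)⁻¹ / k + ((1 + t) ^ (k + 1))⁻¹ / (k + 1)) atTop (𝓝 0) := by
  have hinv {n : ℕ} (hn : n ≠ 0) : Tendsto (fun t : ℝ => ((1 + t) ^ n)⁻¹) atTop (𝓝 0) :=
    ((tendsto_pow_atTop hn).comp (tendsto_atTop_add_const_left _ 1 tendsto_id)).inv_tendsto_atTop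
  simpa using ((hinv hk).neg.div_const (k : ℝ)).add ((hinv k.succ_ne_zero).div_const ((k : ℝ) + 1))

lemma integral_Ioi_div_one_add_pow {k : ℕ} (hk : k ≠ 0) :
    IntegrableOn (fun s : ℝ => s / (1 + s) ^ (k + 2)) (Ioi 0) ∧
      ∫ s in Ioi (0 : ℝ), s / (1 + s) ^ (k + 2) = 1 / (k * (k + 1)) := by
  have hderiv (s : ℝ) (hs : s ∈ Ici (0 : ℝ)) := hasDerivAt_antideriv_div_one_add_pow hk hs.out
  have hnonneg (s : ℝ) (hs : s ∈ Ioi (0 : ℝ)) : 0 ≤ s / (1 + s) ^ (k + 2) := by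
    have : 0 < s := hs; positivity
  refine ⟨integrableOn_Ioi_deriv_of_nonneg' hderiv hnonneg (tendsto_antideriv_div_one_add_pow hk), ?_⟩
  rw [integral_Ioi_of_hasDerivAt_of_nonneg' hderiv hnonneg (tendsto_antideriv_div_one_add_pow hk)]
  have : (k : ℝ) ≠ 0 := by exact_mod_cast hk
  field_simp
  ring

lemma sq_div_add_two_mul_pow_four_div_le {w c s : ℝ} (hs : 0 < s) (hw : |w| ≤ c * s) :
    w ^ 2 / s + 2 * w ^ 4 / s ^ 3 ≤ c ^ 2 * s + 2 * c ^ 4 * s := by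
  have h2 : w ^ 2 ≤ (c * s) ^ 2 := sq_le_sq' (abs_le.mp hw).1 (abs_le.mp hw).2
  have h4 : w ^ 4 ≤ (c * s) ^ 4 := by
    simpa only [← pow_mul] using pow_le_pow_left₀ (sq_nonneg w) h2 2
  calc w ^ 2 / s + 2 * w ^ 4 / s ^ 3 ≤ (c * s) ^ 2 / s + 2 * (c * s) ^ 4 / s ^ 3 := by gcongr
    _ = c ^ 2 * s + 2 * c ^ 4 * s := by field_simp

lemma div_sq_one_add_add_mul_one_add_le {x s u : ℝ} (hx : 0 ≤ x) (hs : 0 ≤ s) (hu : 0 ≤ u) :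
    x * s / (2 * (1 + s + u) ^ 2 * (1 + u)) ≤ x / (2 * (1 + s) ^ 2) * s := by
  have hden : (1 + s) ^ 2 ≤ (1 + s + u) ^ 2 * (1 + u) :=
    calc (1 + s) ^ 2 ≤ (1 + s + u) ^ 2 := pow_le_pow_left₀ (by positivity) (by linarith) 2
      _ ≤ (1 + s + u) ^ 2 * (1 + u) := le_mul_of_one_le_right (by positivity) (by linarith)
  rw [div_mul_eq_mul_div, mul_assoc]
  exact div_le_div_of_nonneg_left (by positivity) (by positivity) (by linarith)

theorem key_integral_estimate_general
    (u x : ℝ) (hu : 0 ≤ u) (hx : 0 < x)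
    (w : ℝ → ℝ)
    (hbound : ∀ s : ℝ, 0 < s →
      |w s| ≤ x * s / (2 * (1 + s + u) ^ 2 * (1 + u))) :
    ∫ s in Set.Ioi (0:ℝ), ((w s) ^ 2 / s + 2 * (w s) ^ 4 / s ^ 3) ≤
      (x ^ 2 + x ^ 4) / 24 := by
  obtain ⟨hint₄, hval₄⟩ := integral_Ioi_div_one_add_pow (k := 2) two_ne_zero
  obtain ⟨hint₈, hval₈⟩ := integral_Ioi_div_one_add_pow (k := 6) (by norm_num)
  norm_num at hint₄ hval₄ hint₈ hval₈
  have hmajor : ∀ s ∈ Ioi (0 : ℝ), w s ^ 2 / s + 2 * w s ^ 4 / s ^ 3 ≤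
      x ^ 2 / 4 * (s / (1 + s) ^ 4) + x ^ 4 / 8 * (s / (1 + s) ^ 8) := fun s (hs : 0 < s) =>
    calc _ ≤ (x / (2 * (1 + s) ^ 2)) ^ 2 * s + 2 * (x / (2 * (1 + s) ^ 2)) ^ 4 * s :=
          sq_div_add_two_mul_pow_four_div_le hs
            ((hbound s hs).trans (div_sq_one_add_add_mul_one_add_le hx.le hs.le hu))
      _ = _ := by field_simp; ring
  calc ∫ s in Ioi 0, (w s ^ 2 / s + 2 * w s ^ 4 / s ^ 3)
      ≤ ∫ s in Ioi 0, (x ^ 2 / 4 * (s / (1 + s) ^ 4) + x ^ 4 / 8 * (s / (1 + s) ^ 8)) := by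
        refine integral_mono_of_nonneg ?_ ((hint₄.const_mul _).add (hint₈.const_mul _)) ?_
        · filter_upwards [ae_restrict_mem measurableSet_Ioi] with s (hs : 0 < s)
          positivity
        · filter_upwards [ae_restrict_mem measurableSet_Ioi] using hmajor
    _ = x ^ 2 / 24 + x ^ 4 / 336 := by
        rw [integral_add (hint₄.const_mul _) (hint₈.const_mul _), integral_const_mul,
          integral_const_mul, hval₄, hval₈]
        ring
    _ ≤ (x ^ 2 + x ^ 4) / 24 := by linarith [pow_nonneg (sq_nonneg x) 2]

/-- **Key integral estimate for the metric exponent.** If `w` is measurable with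
`|w(s)| ≤ x·s/(2(1+s+u)²(1+u))` for all `s > 0`, then
`∫₀^∞ [w(s)²/s + 2 w(s)⁴/s³] ds ≤ (x² + x⁴)/24`. -/
theorem key_integral_estimate
    (u x : ℝ) (hu : 0 ≤ u) (hx : 0 < x)
    (w : ℝ → ℝ) (hw : Measurable w)
    (hbound : ∀ s : ℝ, 0 < s →
      |w s| ≤ x * s / (2 * (1 + s + u) ^ 2 * (1 + u))) :
    ∫ s in Set.Ioi (0:ℝ), ((w s) ^ 2 / s + 2 * (w s) ^ 4 / s ^ 3) ≤
      (x ^ 2 + x ^ 4) / 24 :=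
  key_integral_estimate_general u x hu hx w hbound

end
end

section
/- Let α > 0 and let h ∈ C¹([0,∞)×[0,∞)) have ‖h‖_X ≤ x, where ‖h‖_X = sup_{u,r≥0}[(1+r+u)²|h(u,r)| + (1+r+u)³|∂h/∂r(u,r)|], and assume |sin h̄(u,r)| ≤ |h(u,r) − h̄(u,r)| for all u ≥ 0, r > 0. Then the metric function g̃(u,r) = ḡ(u,r) − (α/r)∫₀ʳ s²g(u,s)(2 sin²h̄(u,s)/s² + sin⁴h̄(u,s)/s⁴) ds satisfies g̃(u,r) ≥ exp(−α(x² + x⁴)/58) − (α/6)(x² + x⁴) for all u ≥ 0 and r > 0. -/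
/-! The weighted bound on `h` gives `|∂ᵣh(u,t)| ≤ x/(1+t)³`; averaging
`|h(u,s) - h(u,t)| ≤ ∫ₜˢ x/(1+τ)³ dτ` over `t ∈ [0,s]` yields `|h - h̄|(s) ≤ (x/2)·s/(1+s)²`.
With `|sin h̄| ≤ |h - h̄|` the integrand in the exponent of `g` is then at most
`(x²/4 + x⁴/8)/(1+t)³`, whose integral over `(0,∞)` is half its coefficient, so `g`, and hence `ḡ`,
is at least `exp(-α(x²/8 + x⁴/16))`; since `g ≤ 1`, the integrand of the subtracted term of `g̃` is
at most `x²/32 + x⁴/256`. The claim follows from `1 + y ≤ exp y`, from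
`exp(-α(x² + x⁴)/58) ≤ 1`, and from `5/32, 17/256 ≤ 1/6`. -/

noncomputable section
open Real MeasureTheory Set

/-- Bondi metric function `g`. -/
def gmet (α : ℝ) (h : ℝ → ℝ → ℝ) (u r : ℝ) : ℝ :=
  Real.exp (-α * ∫ s in Set.Ioi r,
    ((h u s - hbar h u s) ^ 2 / s) * (1 + 2 * Real.sin (hbar h u s) ^ 2 / s ^ 2))

/-- Radial average of `g`. -/
def gbarm (α : ℝ) (h : ℝ → ℝ → ℝ) (u r : ℝ) : ℝ := (1 / r) * ∫ s in (0:ℝ)..r, gmet α h u s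

/-- Bondi metric function `g̃`. -/
def gtil (α : ℝ) (h : ℝ → ℝ → ℝ) (u r : ℝ) : ℝ :=
  gbarm α h u r - (α / r) * ∫ s in (0:ℝ)..r,
    s ^ 2 * gmet α h u s *
      (2 * Real.sin (hbar h u s) ^ 2 / s ^ 2 + Real.sin (hbar h u s) ^ 4 / s ^ 4)

open Filter Topology

theorem abs_sub_le_sub_of_abs_deriv_le_deriv {D : Set ℝ} (hD : Convex ℝ D) {f G : ℝ → ℝ}
    (hf : ContinuousOn f D) (hG : ContinuousOn G D)
    (hf' : DifferentiableOn ℝ f (interior D)) (hG' : DifferentiableOn ℝ G (interior D))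
    (hle : ∀ t ∈ interior D, |deriv f t| ≤ deriv G t)
    {a b : ℝ} (ha : a ∈ D) (hb : b ∈ D) (hab : a ≤ b) :
    |f b - f a| ≤ G b - G a := by
  have hsub : MonotoneOn (G - f) D := monotoneOn_of_deriv_nonneg hD (hG.sub hf) (hG'.sub hf')
    fun t ht ↦ by
      rw [deriv_sub (hG'.differentiableAt (isOpen_interior.mem_nhds ht))
        (hf'.differentiableAt (isOpen_interior.mem_nhds ht))]
      linarith [le_abs_self (deriv f t), hle t ht]
  have hadd : MonotoneOn (G + f) D := monotoneOn_of_deriv_nonneg hD (hG.add hf) (hG'.add hf')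
    fun t ht ↦ by
      rw [deriv_add (hG'.differentiableAt (isOpen_interior.mem_nhds ht))
        (hf'.differentiableAt (isOpen_interior.mem_nhds ht))]
      linarith [neg_abs_le (deriv f t), hle t ht]
  have h₁ := hsub ha hb hab
  have h₂ := hadd ha hb hab
  simp only [Pi.sub_apply, Pi.add_apply] at h₁ h₂
  rw [abs_sub_le_iff]
  constructor <;> linarith

theorem sub_average_eq {φ : ℝ → ℝ} {s : ℝ} (hs : s ≠ 0) (hφ : IntervalIntegrable φ volume 0 s) :
    φ s - 1 / s * ∫ t in (0:ℝ)..s, φ t = 1 / s * ∫ t in (0:ℝ)..s, φ s - φ t := by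
  rw [intervalIntegral.integral_sub intervalIntegrable_const hφ, intervalIntegral.integral_const,
    smul_eq_mul, sub_zero]
  field_simp

theorem abs_sub_average_le_s10 {f G : ℝ → ℝ} {s : ℝ} (hs : 0 < s)
    (hf : ContinuousOn f (Icc 0 s)) (hG : ContinuousOn G (Icc 0 s))
    (hfG : ∀ t ∈ Icc 0 s, |f s - f t| ≤ G s - G t) :
    |f s - 1 / s * ∫ t in (0:ℝ)..s, f t| ≤ G s - 1 / s * ∫ t in (0:ℝ)..s, G t := by
  rw [← uIcc_of_le hs.le] at hf hG
  rw [sub_average_eq hs.ne' hf.intervalIntegrable, sub_average_eq hs.ne' hG.intervalIntegrable,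
    abs_mul, abs_of_pos (one_div_pos.2 hs)]
  gcongr
  refine (intervalIntegral.abs_integral_le_integral_abs hs.le).trans
    (intervalIntegral.integral_mono_on hs.le ?_ ?_ hfG)
  · exact (continuousOn_const.sub hf).abs.intervalIntegrable
  · exact (continuousOn_const.sub hG).intervalIntegrable

theorem hasDerivAt_one_div_one_add_pow (n : ℕ) {t : ℝ} (ht : 1 + t ≠ 0) :
    HasDerivAt (fun t : ℝ ↦ 1 / (1 + t) ^ n) (-(n / (1 + t) ^ (n + 1))) t := by
  simp only [one_div]
  refine ((((hasDerivAt_id' t).const_add 1).fun_pow n).fun_inv (pow_ne_zero _ ht)).congr_deriv ?_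
  rcases n with _ | n
  · simp
  · simp only [Nat.cast_add, Nat.cast_one, add_tsub_cancel_right, mul_one]
    field_simp
    ring

theorem abs_sub_average_le_of_abs_deriv_le {f : ℝ → ℝ} {x s : ℝ} (hf : ContinuousOn f (Ici 0))
    (hf' : DifferentiableOn ℝ f (Ioi 0)) (hbound : ∀ t > 0, |deriv f t| ≤ x / (1 + t) ^ 3)
    (hs : 0 < s) :
    |f s - 1 / s * ∫ t in (0:ℝ)..s, f t| ≤ x / 2 * (s / (1 + s) ^ 2) := by
  set G : ℝ → ℝ := fun t ↦ -(x / 2) * (1 / (1 + t) ^ 2)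
  have hG (t : ℝ) (ht : 0 ≤ t) : HasDerivAt G (x / (1 + t) ^ 3) t := by
    refine ((hasDerivAt_one_div_one_add_pow 2 (by positivity)).const_mul _).congr_deriv ?_
    push_cast
    ring
  have hGc : ContinuousOn G (Ici 0) := fun t ht ↦ (hG t ht).continuousAt.continuousWithinAt
  have hGd : DifferentiableOn ℝ G (interior (Ici 0)) := by
    rw [interior_Ici]
    exact fun t ht ↦ (hG t (le_of_lt ht)).differentiableAt.differentiableWithinAt
  have hle : ∀ t ∈ interior (Ici (0:ℝ)), |deriv f t| ≤ deriv G t := by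
    rw [interior_Ici]
    intro t ht
    rw [(hG t (le_of_lt ht)).deriv]
    exact hbound t ht
  have hGint : ∫ t in (0:ℝ)..s, G t = -(x / 2) * (1 - 1 / (1 + s)) := by
    rw [intervalIntegral.integral_eq_sub_of_hasDerivAt (f := fun t ↦ x / 2 * (1 / (1 + t) ^ 1))]
    · norm_num
      ring
    · intro t ht
      rw [uIcc_of_le hs.le] at ht
      refine ((hasDerivAt_one_div_one_add_pow 1 (by linarith [ht.1])).const_mul _).congr_deriv ?_
      norm_num [G]
    · exact (hGc.mono Icc_subset_Ici_self).intervalIntegrable_of_Icc hs.le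
  calc |f s - 1 / s * ∫ t in (0:ℝ)..s, f t| ≤ G s - 1 / s * ∫ t in (0:ℝ)..s, G t :=
        abs_sub_average_le_s10 hs (hf.mono Icc_subset_Ici_self) (hGc.mono Icc_subset_Ici_self)
          fun t ht ↦ abs_sub_le_sub_of_abs_deriv_le_deriv (convex_Ici 0) hf hGc
            (by rwa [interior_Ici]) hGd hle ht.1 hs.le ht.2
    _ = x / 2 * (s / (1 + s) ^ 2) := by
        rw [hGint]
        simp only [G]
        field_simp
        ring

theorem tendsto_one_div_one_add_pow_atTop {n : ℕ} (hn : n ≠ 0) :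
    Tendsto (fun t : ℝ ↦ 1 / (1 + t) ^ n) atTop (𝓝 0) := by
  simp only [one_div]
  exact ((tendsto_pow_atTop hn).comp
    (tendsto_atTop_add_const_left _ 1 tendsto_id)).inv_tendsto_atTop

theorem integrableOn_Ioi_one_div_one_add_pow_and_integral_eq {n : ℕ} (hn : n ≠ 0) :
    IntegrableOn (fun t : ℝ ↦ 1 / (1 + t) ^ (n + 1)) (Ioi 0) ∧
      ∫ t in Ioi (0:ℝ), 1 / (1 + t) ^ (n + 1) = 1 / n := by
  have hderiv (t : ℝ) (ht : t ∈ Ici 0) : HasDerivAt (fun t : ℝ ↦ -(1 / n) * (1 / (1 + t) ^ n))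
      (1 / (1 + t) ^ (n + 1)) t := by
    have : 1 + t ≠ 0 := by have : (0:ℝ) ≤ t := ht; positivity
    refine ((hasDerivAt_one_div_one_add_pow n this).const_mul _).congr_deriv ?_
    field_simp
  have hpos (t : ℝ) (ht : t ∈ Ioi 0) : 0 ≤ 1 / (1 + t) ^ (n + 1) := by
    have : (0:ℝ) < t := ht; positivity
  have hlim := (tendsto_one_div_one_add_pow_atTop hn).const_mul (-(1 / (n:ℝ)))
  rw [mul_zero] at hlim
  refine ⟨integrableOn_Ioi_deriv_of_nonneg' hderiv hpos hlim, ?_⟩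
  rw [integral_Ioi_of_hasDerivAt_of_nonneg' hderiv hpos hlim]
  simp

theorem le_one_div_mul_integral {g : ℝ → ℝ} {m r : ℝ} (hr : 0 < r)
    (hg : IntervalIntegrable g volume 0 r) (hm : ∀ s ∈ Ioo 0 r, m ≤ g s) :
    m ≤ 1 / r * ∫ s in (0:ℝ)..r, g s := by
  have := intervalIntegral.integral_mono_on_of_le_Ioo hr.le intervalIntegrable_const hg hm
  rw [intervalIntegral.integral_const, smul_eq_mul, sub_zero] at this
  rw [one_div_mul_eq_div, le_div_iff₀ hr]
  linarith

theorem one_div_mul_integral_le {w : ℝ → ℝ} {M r : ℝ} (hr : 0 < r)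
    (hw₀ : ∀ s ∈ Ioc 0 r, 0 ≤ w s) (hwM : ∀ s ∈ Ioc 0 r, w s ≤ M) :
    1 / r * ∫ s in (0:ℝ)..r, w s ≤ M := by
  have : ∫ s in Ioc 0 r, w s ≤ ∫ _ in Ioc 0 r, M :=
    integral_mono_of_nonneg (ae_restrict_of_forall_mem measurableSet_Ioc hw₀)
      (integrableOn_const measure_Ioc_lt_top.ne) (ae_restrict_of_forall_mem measurableSet_Ioc hwM)
  rw [setIntegral_const, measureReal_def, Real.volume_Ioc, ENNReal.toReal_ofReal (by linarith),
    smul_eq_mul, sub_zero] at this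
  rw [intervalIntegral.integral_of_le hr.le, one_div_mul_eq_div, div_le_iff₀ hr]
  linarith

theorem sq_mul_div_one_add_sq_div_sq_le (x : ℝ) {t : ℝ} (ht : 0 < t) :
    (x / 2 * (t / (1 + t) ^ 2)) ^ 2 / t ^ 2 ≤ x ^ 2 / 4 := by
  have : (x / 2 * (t / (1 + t) ^ 2)) ^ 2 / t ^ 2 = x ^ 2 / 4 * (1 / ((1 + t) ^ 2) ^ 2) := by
    field_simp
    ring
  rw [this]
  refine mul_le_of_le_one_right (by positivity) ?_
  rw [div_le_one (by positivity)]
  exact one_le_pow₀ (one_le_pow₀ (by linarith))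

theorem sq_mul_div_one_add_sq_div_le (x : ℝ) {t : ℝ} (ht : 0 < t) :
    (x / 2 * (t / (1 + t) ^ 2)) ^ 2 / t ≤ x ^ 2 / 4 * (1 / (1 + t) ^ 3) := by
  have : (x / 2 * (t / (1 + t) ^ 2)) ^ 2 / t = x ^ 2 / 4 * (t / (1 + t) ^ 4) := by
    field_simp
    ring
  rw [this]
  gcongr ?_ * ?_
  rw [div_le_div_iff₀ (by positivity) (by positivity)]
  calc t * (1 + t) ^ 3 ≤ (1 + t) * (1 + t) ^ 3 := by gcongr; linarith
    _ = 1 * (1 + t) ^ 4 := by ring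

theorem sq_mul_div_one_add_sq_le (x : ℝ) {t : ℝ} (ht : 0 ≤ t) :
    (x / 2 * (t / (1 + t) ^ 2)) ^ 2 ≤ x ^ 2 / 64 := by
  have : t / (1 + t) ^ 2 ≤ 1 / 4 := by
    rw [div_le_iff₀ (by positivity)]
    nlinarith [sq_nonneg (1 - t)]
  calc (x / 2 * (t / (1 + t) ^ 2)) ^ 2 = x ^ 2 / 4 * (t / (1 + t) ^ 2) ^ 2 := by ring
    _ ≤ x ^ 2 / 4 * (1 / 4) ^ 2 := by gcongr
    _ = x ^ 2 / 64 := by ring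

theorem gtil_integrand_le {g σ s x : ℝ} (hs : 0 < s) (hg : g ≤ 1)
    (hσ : |σ| ≤ x / 2 * (s / (1 + s) ^ 2)) :
    s ^ 2 * g * (2 * σ ^ 2 / s ^ 2 + σ ^ 4 / s ^ 4) ≤ x ^ 2 / 32 + x ^ 4 / 256 := by
  have hσD : σ ^ 2 ≤ (x / 2 * (s / (1 + s) ^ 2)) ^ 2 := sq_le_sq.2 (hσ.trans (le_abs_self _))
  calc s ^ 2 * g * (2 * σ ^ 2 / s ^ 2 + σ ^ 4 / s ^ 4) = g * σ ^ 2 * (2 + σ ^ 2 / s ^ 2) := by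
        field_simp
    _ ≤ 1 * (x ^ 2 / 64) * (2 + x ^ 2 / 4) := by
        refine mul_le_mul (mul_le_mul hg (hσD.trans (sq_mul_div_one_add_sq_le x hs.le))
          (sq_nonneg σ) zero_le_one) ?_ (by positivity) (by positivity)
        grw [hσD, sq_mul_div_one_add_sq_div_sq_le x hs]
    _ = x ^ 2 / 32 + x ^ 4 / 256 := by ring

def gmetIntegrand (h : ℝ → ℝ → ℝ) (u t : ℝ) : ℝ :=
  ((h u t - hbar h u t) ^ 2 / t) * (1 + 2 * Real.sin (hbar h u t) ^ 2 / t ^ 2)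

section Bondi

variable {α : ℝ} {h : ℝ → ℝ → ℝ} {u : ℝ}

theorem gmet_eq_exp (r : ℝ) : gmet α h u r = exp (-α * ∫ t in Ioi r, gmetIntegrand h u t) := rfl

theorem gmet_pos (r : ℝ) : 0 < gmet α h u r := exp_pos _

theorem gmetIntegrand_nonneg {t : ℝ} (ht : 0 < t) : 0 ≤ gmetIntegrand h u t := by
  unfold gmetIntegrand
  positivity

theorem gmet_le_one (hα : 0 ≤ α) {r : ℝ} (hr : 0 ≤ r) : gmet α h u r ≤ 1 := by
  rw [gmet_eq_exp, exp_le_one_iff, neg_mul, neg_nonpos]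
  exact mul_nonneg hα <| setIntegral_nonneg measurableSet_Ioi
    fun t ht ↦ gmetIntegrand_nonneg (hr.trans_lt ht)

theorem gmet_monotoneOn (hα : 0 ≤ α) (hint : IntegrableOn (gmetIntegrand h u) (Ioi 0)) :
    MonotoneOn (gmet α h u) (Ici 0) := by
  intro r₁ hr₁ r₂ _ hr
  rw [gmet_eq_exp, gmet_eq_exp, exp_le_exp, neg_mul, neg_mul, neg_le_neg_iff]
  refine mul_le_mul_of_nonneg_left (setIntegral_mono_set (hint.mono_set (Ioi_subset_Ioi hr₁)) ?_
    (Ioi_subset_Ioi hr).eventuallyLE) hα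
  exact ae_restrict_of_forall_mem measurableSet_Ioi fun t ht ↦
    gmetIntegrand_nonneg (lt_of_le_of_lt hr₁ ht)

theorem exp_neg_integral_le_gmet (hα : 0 ≤ α) {B : ℝ → ℝ} (hB : IntegrableOn B (Ioi 0))
    (hle : ∀ t > 0, gmetIntegrand h u t ≤ B t) {r : ℝ} (hr : 0 ≤ r) :
    exp (-α * ∫ t in Ioi 0, B t) ≤ gmet α h u r := by
  rw [gmet_eq_exp, exp_le_exp, neg_mul, neg_mul, neg_le_neg_iff]
  refine mul_le_mul_of_nonneg_left ?_ hα
  have hB₀ : ∀ t ∈ Ioi (0:ℝ), 0 ≤ B t := fun t ht ↦ (gmetIntegrand_nonneg ht).trans (hle t ht)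
  calc ∫ t in Ioi r, gmetIntegrand h u t ≤ ∫ t in Ioi r, B t :=
        integral_mono_of_nonneg
          (ae_restrict_of_forall_mem measurableSet_Ioi
            fun t ht ↦ gmetIntegrand_nonneg (hr.trans_lt ht))
          (hB.mono_set (Ioi_subset_Ioi hr))
          (ae_restrict_of_forall_mem measurableSet_Ioi fun t ht ↦ hle t (hr.trans_lt ht))
    _ ≤ ∫ t in Ioi 0, B t := setIntegral_mono_set hB
        (ae_restrict_of_forall_mem measurableSet_Ioi hB₀) (Ioi_subset_Ioi hr).eventuallyLE

theorem continuousOn_hbar (hf : ContinuousOn (h u) (Ici 0)) : ContinuousOn (hbar h u) (Ioi 0) := by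
  intro t (ht : 0 < t)
  have hprim : HasDerivAt (fun r ↦ ∫ s in (0:ℝ)..r, h u s) (h u t) t :=
    intervalIntegral.integral_hasDerivAt_right
      ((hf.mono (by rw [uIcc_of_le ht.le]; exact Icc_subset_Ici_self)).intervalIntegrable)
      ((hf.mono Ioi_subset_Ici_self).stronglyMeasurableAtFilter isOpen_Ioi t ht)
      (hf.continuousAt (Ici_mem_nhds ht))
  exact ((continuousAt_const.div continuousAt_id (ne_of_gt ht)).mul
    hprim.continuousAt).continuousWithinAt

theorem integrableOn_gmetIntegrand (hf : ContinuousOn (h u) (Ici 0)) {B : ℝ → ℝ}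
    (hB : IntegrableOn B (Ioi 0)) (hle : ∀ t > 0, gmetIntegrand h u t ≤ B t) :
    IntegrableOn (gmetIntegrand h u) (Ioi 0) := by
  have hbar_cont := continuousOn_hbar hf
  have hcont : ContinuousOn (gmetIntegrand h u) (Ioi 0) := by
    unfold gmetIntegrand
    exact ((((hf.mono Ioi_subset_Ici_self).sub hbar_cont).pow 2).div continuousOn_id
      fun t ht ↦ ne_of_gt ht).mul (continuousOn_const.add
        ((continuousOn_const.mul ((continuous_sin.comp_continuousOn hbar_cont).pow 2)).div
          (continuousOn_id.pow 2) fun t ht ↦ pow_ne_zero _ (ne_of_gt ht)))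
  refine hB.mono' (hcont.aestronglyMeasurable measurableSet_Ioi) ?_
  refine ae_restrict_of_forall_mem measurableSet_Ioi fun t ht ↦ ?_
  rw [norm_of_nonneg (gmetIntegrand_nonneg ht)]
  exact hle t ht

theorem gmetIntegrand_le {x t : ℝ} (ht : 0 < t)
    (hsin : |sin (hbar h u t)| ≤ |h u t - hbar h u t|)
    (hdev : |h u t - hbar h u t| ≤ x / 2 * (t / (1 + t) ^ 2)) :
    gmetIntegrand h u t ≤ (x ^ 2 / 4 + x ^ 4 / 8) * (1 / (1 + t) ^ 3) := by
  set D := x / 2 * (t / (1 + t) ^ 2)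
  have hd : (h u t - hbar h u t) ^ 2 ≤ D ^ 2 := sq_le_sq.2 (hdev.trans (le_abs_self D))
  have hσ : sin (hbar h u t) ^ 2 ≤ D ^ 2 := sq_le_sq.2 ((hsin.trans hdev).trans (le_abs_self D))
  calc gmetIntegrand h u t ≤ D ^ 2 / t * (1 + 2 * (D ^ 2 / t ^ 2)) := by
        unfold gmetIntegrand
        rw [← mul_div_assoc]
        gcongr
    _ ≤ x ^ 2 / 4 * (1 / (1 + t) ^ 3) * (1 + 2 * (x ^ 2 / 4)) := by
        gcongr ?_ * (1 + 2 * ?_)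
        · exact sq_mul_div_one_add_sq_div_le x ht
        · exact sq_mul_div_one_add_sq_div_sq_le x ht
    _ = (x ^ 2 / 4 + x ^ 4 / 8) * (1 / (1 + t) ^ 3) := by ring

theorem exp_neg_integral_le_gbarm (hα : 0 ≤ α) (hf : ContinuousOn (h u) (Ici 0)) {B : ℝ → ℝ}
    (hB : IntegrableOn B (Ioi 0)) (hle : ∀ t > 0, gmetIntegrand h u t ≤ B t) {r : ℝ} (hr : 0 < r) :
    exp (-α * ∫ t in Ioi 0, B t) ≤ gbarm α h u r := by
  have hmono := gmet_monotoneOn hα (integrableOn_gmetIntegrand hf hB hle)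
  refine le_one_div_mul_integral hr ((hmono.mono ?_).intervalIntegrable)
    fun s hs ↦ exp_neg_integral_le_gmet hα hB hle hs.1.le
  rw [uIcc_of_le hr.le]
  exact Icc_subset_Ici_self

theorem one_div_mul_integral_gtil_integrand_le (hα : 0 ≤ α) {x r : ℝ} (hr : 0 < r)
    (hsin : ∀ s > 0, |sin (hbar h u s)| ≤ x / 2 * (s / (1 + s) ^ 2)) :
    1 / r * ∫ s in (0:ℝ)..r, s ^ 2 * gmet α h u s *
      (2 * sin (hbar h u s) ^ 2 / s ^ 2 + sin (hbar h u s) ^ 4 / s ^ 4) ≤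
        x ^ 2 / 32 + x ^ 4 / 256 :=
  one_div_mul_integral_le hr (fun s hs ↦ by have : 0 < gmet α h u s := gmet_pos s; positivity)
    fun s hs ↦ gtil_integrand_le hs.1 (gmet_le_one hα hs.1.le) (hsin s hs.1)

end Bondi

theorem contDiffOn_apply_of_contDiffOn_uncurry {h : ℝ → ℝ → ℝ} {n : WithTop ℕ∞} {s t : Set ℝ}
    (hC : ContDiffOn ℝ n (fun p : ℝ × ℝ => h p.1 p.2) (s ×ˢ t)) {u : ℝ} (hu : u ∈ s) :
    ContDiffOn ℝ n (h u) t :=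
  hC.comp (contDiffOn_const.prodMk contDiffOn_id) fun _ ht ↦ ⟨hu, ht⟩

theorem abs_deriv_le_of_weighted_le {f : ℝ → ℝ} {x u t : ℝ} (hu : 0 ≤ u) (ht : 0 ≤ t)
    (hft : (1 + t + u) ^ 2 * |f t| + (1 + t + u) ^ 3 * |deriv f t| ≤ x) :
    |deriv f t| ≤ x / (1 + t) ^ 3 := by
  rw [le_div_iff₀ (by positivity), mul_comm]
  calc (1 + t) ^ 3 * |deriv f t| ≤ (1 + t + u) ^ 3 * |deriv f t| :=
        mul_le_mul_of_nonneg_right (pow_le_pow_left₀ (by positivity) (by linarith) 3) (abs_nonneg _)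
    _ ≤ x := by linarith [mul_nonneg (sq_nonneg (1 + t + u)) (abs_nonneg (f t))]

/-- **Lower bound on the Bondi metric function `g̃`.** If `‖h‖_X ≤ x` and
`|sin h̄| ≤ |h − h̄|` pointwise, then
`g̃(u,r) ≥ exp(−α(x²+x⁴)/58) − (α/6)(x²+x⁴)`. -/
theorem gtil_lower_bound
    (α x : ℝ) (hα : 0 < α)
    (h : ℝ → ℝ → ℝ)
    (hC1 : ContDiffOn ℝ 1 (fun p : ℝ × ℝ => h p.1 p.2) (Set.Ici 0 ×ˢ Set.Ici 0))
    (hnorm : ∀ u : ℝ, 0 ≤ u → ∀ r : ℝ, 0 ≤ r →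
      (1 + r + u) ^ 2 * |h u r| +
        (1 + r + u) ^ 3 * |deriv (fun r' => h u r') r| ≤ x)
    (hsin : ∀ u : ℝ, 0 ≤ u → ∀ r : ℝ, 0 < r →
      |Real.sin (hbar h u r)| ≤ |h u r - hbar h u r|) :
    ∀ u : ℝ, 0 ≤ u → ∀ r : ℝ, 0 < r →
      Real.exp (-α * (x ^ 2 + x ^ 4) / 58) - (α / 6) * (x ^ 2 + x ^ 4) ≤
        gtil α h u r := by
  intro u hu r hr
  have hslice : ContDiffOn ℝ 1 (h u) (Ici 0) := contDiffOn_apply_of_contDiffOn_uncurry hC1 hu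
  have hdev (t : ℝ) (ht : 0 < t) : |h u t - hbar h u t| ≤ x / 2 * (t / (1 + t) ^ 2) :=
    abs_sub_average_le_of_abs_deriv_le hslice.continuousOn
      ((hslice.differentiableOn one_ne_zero).mono Ioi_subset_Ici_self)
      (fun t ht ↦ abs_deriv_le_of_weighted_le hu ht.le (hnorm u hu t ht.le)) ht
  obtain ⟨hint, hval⟩ := integrableOn_Ioi_one_div_one_add_pow_and_integral_eq two_ne_zero
  have hgbar : exp (-α * ((x ^ 2 / 4 + x ^ 4 / 8) * (1 / 2))) ≤ gbarm α h u r := by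
    have := exp_neg_integral_le_gbarm hα.le hslice.continuousOn (hint.const_mul _)
      (fun t ht ↦ gmetIntegrand_le ht (hsin u hu t ht) (hdev t ht)) hr
    rwa [integral_const_mul, hval, Nat.cast_ofNat] at this
  have hsub := one_div_mul_integral_gtil_integrand_le hα.le hr
    fun s hs ↦ (hsin u hu s hs).trans (hdev s hs)
  have hexp : exp (-α * (x ^ 2 + x ^ 4) / 58) ≤ 1 :=
    exp_le_one_iff.2 (by rw [neg_mul, neg_div, neg_nonpos]; positivity)
  rw [gtil, div_eq_mul_one_div α r, mul_assoc]
  calc exp (-α * (x ^ 2 + x ^ 4) / 58) - α / 6 * (x ^ 2 + x ^ 4)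
      ≤ 1 + -α * ((x ^ 2 / 4 + x ^ 4 / 8) * (1 / 2)) - α * (x ^ 2 / 32 + x ^ 4 / 256) := by
        nlinarith [mul_nonneg hα.le (sq_nonneg x), mul_nonneg hα.le (pow_nonneg (sq_nonneg x) 2)]
    _ ≤ exp (-α * ((x ^ 2 / 4 + x ^ 4 / 8) * (1 / 2))) - α * (x ^ 2 / 32 + x ^ 4 / 256) := by
        linarith [add_one_le_exp (-α * ((x ^ 2 / 4 + x ^ 4 / 8) * (1 / 2)))]
    _ ≤ _ := by linarith [mul_le_mul_of_nonneg_left hsub hα.le]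

end
end

section
/- Let α > 0 and let h ∈ C¹([0,∞)×[0,∞)) have ‖h‖_X ≤ x, where ‖h‖_X = sup_{u,r≥0}[(1+r+u)²|h(u,r)| + (1+r+u)³|∂h/∂r(u,r)|], and assume |sin h̄(u,r)| ≤ |h(u,r) − h̄(u,r)| for all u ≥ 0, r > 0. Then the radial derivative of the metric function g equals ∂g/∂r(u,r) = α·g(u,r)·((h(u,r)−h̄(u,r))²/r)(1 + 2 sin²h̄(u,r)/r²), and it satisfies 0 ≤ ∂g/∂r(u,r) ≤ α(x² + x⁴)·r/(4(1+r+u)⁴(1+u)²). -/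
/-!
Writing `g = exp (-α ∫_r^∞ F)` with `F = ((h - h̄)²/s)(1 + 2 sin² h̄/s²) ≥ 0`, the fundamental
theorem of calculus gives `∂g/∂r = α g F(r)`, and `0 < g ≤ 1` reduces both bounds to a pointwise
bound on `F`. The `X`-norm bound `|∂ᵣh| ≤ x (1+u+r)⁻³` integrates to
`|h(r) - h(t)| ≤ (x/2)((1+u+t)⁻² - (1+u+r)⁻²)`, and averaging over `t ∈ [0, r]` gives
`|h - h̄| ≤ x r / (2 (1+u) (1+u+r)²)`. With `|sin h̄| ≤ |h - h̄|` this bounds `F(r)` by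
`(x² + x⁴) r / (4 (1+r+u)⁴ (1+u)²)`, which is `O(r⁻³)` and so also makes `F` integrable at infinity.
-/

noncomputable section
open Real MeasureTheory Set

theorem abs_sub_le_sub_of_abs_hasDerivAt_le {f f' B B' : ℝ → ℝ} {a b : ℝ} (hab : a ≤ b)
    (hf : ContinuousOn f (Icc a b)) (hB : ContinuousOn B (Icc a b))
    (hf' : ∀ y ∈ Ioo a b, HasDerivAt f (f' y) y) (hB' : ∀ y ∈ Ioo a b, HasDerivAt B (B' y) y)
    (hle : ∀ y ∈ Ioo a b, |f' y| ≤ B' y) :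
    |f b - f a| ≤ B b - B a := by
  have hsub : MonotoneOn (fun y => B y - f y) (Icc a b) := by
    refine monotoneOn_of_hasDerivWithinAt_nonneg (f' := fun y => B' y - f' y) (convex_Icc a b)
      (hB.sub hf) ?_ ?_ <;>
      rw [interior_Icc]
    · exact fun y hy => ((hB' y hy).sub (hf' y hy)).hasDerivWithinAt
    · exact fun y hy => sub_nonneg.2 ((le_abs_self _).trans (hle y hy))
  have hadd : MonotoneOn (fun y => B y + f y) (Icc a b) := by
    refine monotoneOn_of_hasDerivWithinAt_nonneg (f' := fun y => B' y + f' y) (convex_Icc a b)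
      (hB.add hf) ?_ ?_ <;>
      rw [interior_Icc]
    · exact fun y hy => ((hB' y hy).add (hf' y hy)).hasDerivWithinAt
    · exact fun y hy => by linarith [neg_abs_le (f' y), hle y hy]
  have ha : a ∈ Icc a b := left_mem_Icc.2 hab
  have hb : b ∈ Icc a b := right_mem_Icc.2 hab
  have h₁ := hsub ha hb hab
  have h₂ := hadd ha hb hab
  exact abs_sub_le_iff.2 ⟨by linarith, by linarith⟩

theorem hasDerivAt_setIntegral_Ioi {E : Type*} [NormedAddCommGroup E] [NormedSpace ℝ E]
    [CompleteSpace E] {f : ℝ → E} {c r : ℝ} (hf : IntegrableOn f (Ioi c)) (hcr : c < r)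
    (hfr : ContinuousAt f r) :
    HasDerivAt (fun t => ∫ s in Ioi t, f s) (-f r) r := by
  have hprim : HasDerivAt (fun t => ∫ s in c..t, f s) (f r) r :=
    intervalIntegral.integral_hasDerivAt_right
      ((intervalIntegrable_iff_integrableOn_Ioc_of_le hcr.le).2 (hf.mono_set Ioc_subset_Ioi_self))
      ⟨Ioi c, Ioi_mem_nhds hcr, hf.aestronglyMeasurable⟩ hfr
  refine (hprim.const_sub (∫ s in Ioi c, f s)).congr_of_eventuallyEq ?_
  filter_upwards [Ioi_mem_nhds hcr] with t ht
  exact eq_sub_of_add_eq'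
    (intervalIntegral.integral_interval_add_Ioi hf (hf.mono_set (Ioi_subset_Ioi (le_of_lt ht))))

theorem integral_inv_sq_sub_inv_sq {a r : ℝ} (ha : 0 < a) (hr : 0 ≤ r) :
    ∫ t in (0:ℝ)..r, (((a + t) ^ 2)⁻¹ - ((a + r) ^ 2)⁻¹) = r ^ 2 / (a * (a + r) ^ 2) := by
  have hpos : ∀ t ∈ uIcc 0 r, a + t ≠ 0 := fun t ht => by
    rw [uIcc_of_le hr] at ht
    linarith [ht.1]
  have hderiv : ∀ t ∈ uIcc 0 r, HasDerivAt (fun t => -(a + t)⁻¹ - t * ((a + r) ^ 2)⁻¹)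
      (((a + t) ^ 2)⁻¹ - ((a + r) ^ 2)⁻¹) t := fun t ht => by
    refine ((((hasDerivAt_id' t).const_add a).fun_inv (hpos t ht)).fun_neg.fun_sub
      ((hasDerivAt_id' t).mul_const ((a + r) ^ 2)⁻¹)).congr_deriv ?_
    ring
  have hint : IntervalIntegrable (fun t => ((a + t) ^ 2)⁻¹ - ((a + r) ^ 2)⁻¹) volume 0 r :=
    (ContinuousOn.sub (ContinuousOn.inv₀ (by fun_prop)
      fun t ht => pow_ne_zero 2 (hpos t ht)) continuousOn_const).intervalIntegrable
  rw [intervalIntegral.integral_eq_sub_of_hasDerivAt hderiv hint]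
  field_simp
  ring

theorem sq_div_mul_one_add_le {D S ε r : ℝ} (hr : 0 < r) (hS : |S| ≤ |D|) (hD : |D| ≤ ε) :
    D ^ 2 / r * (1 + 2 * S ^ 2 / r ^ 2) ≤ ε ^ 2 / r * (1 + 2 * ε ^ 2 / r ^ 2) := by
  have hDε : D ^ 2 ≤ ε ^ 2 := sq_le_sq.2 (hD.trans (le_abs_self ε))
  have hSε : S ^ 2 ≤ ε ^ 2 := (sq_le_sq.2 hS).trans hDε
  gcongr

theorem ContDiffOn.slice {E F G : Type*} [NormedAddCommGroup E] [NormedSpace ℝ E]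
    [NormedAddCommGroup F] [NormedSpace ℝ F] [NormedAddCommGroup G] [NormedSpace ℝ G]
    {h : E → F → G} {n : WithTop ℕ∞} {s : Set E} {t : Set F} {u : E}
    (hh : ContDiffOn ℝ n (fun p : E × F => h p.1 p.2) (s ×ˢ t)) (hu : u ∈ s) :
    ContDiffOn ℝ n (h u) t :=
  hh.comp (contDiff_const.prodMk contDiff_id).contDiffOn fun _ hv => mk_mem_prod hu hv

namespace Bondi

/-- `‖h‖_X ≤ x`. -/
def XNormLe (h : ℝ → ℝ → ℝ) (x : ℝ) : Prop :=
  ∀ u : ℝ, 0 ≤ u → ∀ r : ℝ, 0 ≤ r →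
    (1 + r + u) ^ 2 * |h u r| + (1 + r + u) ^ 3 * |deriv (fun r' => h u r') r| ≤ x

def gmetIntegrand (h : ℝ → ℝ → ℝ) (u s : ℝ) : ℝ :=
  ((h u s - hbar h u s) ^ 2 / s) * (1 + 2 * Real.sin (hbar h u s) ^ 2 / s ^ 2)

theorem gmet_eq_exp (α : ℝ) (h : ℝ → ℝ → ℝ) (u r : ℝ) :
    gmet α h u r = exp (-α * ∫ s in Ioi r, gmetIntegrand h u s) :=
  rfl

variable {α x u : ℝ} {h : ℝ → ℝ → ℝ}

theorem XNormLe.nonneg (hX : XNormLe h x) : 0 ≤ x :=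
  le_trans (by positivity) (hX 0 le_rfl 0 le_rfl)

theorem XNormLe.abs_deriv_le (hX : XNormLe h x) (hu : 0 ≤ u) {r : ℝ} (hr : 0 ≤ r) :
    |deriv (h u) r| ≤ x * ((1 + u + r) ^ 3)⁻¹ := by
  have hbound := hX u hu r hr
  have hh : 0 ≤ (1 + r + u) ^ 2 * |h u r| := by positivity
  rw [← div_eq_mul_inv, le_div_iff₀ (by positivity), show 1 + u + r = 1 + r + u by ring]
  linarith

theorem continuousOn_slice
    (hC1 : ContDiffOn ℝ 1 (fun p : ℝ × ℝ => h p.1 p.2) (Ici 0 ×ˢ Ici 0)) (hu : 0 ≤ u) :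
    ContinuousOn (h u) (Ici 0) :=
  (hC1.slice hu).continuousOn

theorem hasDerivAt_slice
    (hC1 : ContDiffOn ℝ 1 (fun p : ℝ × ℝ => h p.1 p.2) (Ici 0 ×ˢ Ici 0)) (hu : 0 ≤ u) {s : ℝ}
    (hs : 0 < s) : HasDerivAt (h u) (deriv (h u) s) s :=
  (((hC1.slice hu).differentiableOn one_ne_zero).differentiableAt (Ici_mem_nhds hs)).hasDerivAt

theorem continuousOn_hbar
    (hC1 : ContDiffOn ℝ 1 (fun p : ℝ × ℝ => h p.1 p.2) (Ici 0 ×ˢ Ici 0)) (hu : 0 ≤ u) :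
    ContinuousOn (hbar h u) (Ioi 0) := by
  intro s (hs : 0 < s)
  have hcont := continuousOn_slice hC1 hu
  have hprim : ContinuousAt (fun r => ∫ t in (0:ℝ)..r, h u t) s :=
    (intervalIntegral.integral_hasDerivAt_right
      (hcont.mono (uIcc_of_le (le_of_lt hs) ▸ Icc_subset_Ici_self)).intervalIntegrable
      ⟨Ioi 0, Ioi_mem_nhds hs,
        (hcont.mono Ioi_subset_Ici_self).aestronglyMeasurable measurableSet_Ioi⟩
      (hcont.continuousAt (Ici_mem_nhds hs))).continuousAt
  exact ((continuousAt_const.div continuousAt_id (ne_of_gt hs)).mul hprim).continuousWithinAt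

theorem continuousOn_gmetIntegrand
    (hC1 : ContDiffOn ℝ 1 (fun p : ℝ × ℝ => h p.1 p.2) (Ici 0 ×ˢ Ici 0)) (hu : 0 ≤ u) :
    ContinuousOn (gmetIntegrand h u) (Ioi 0) := by
  have hcb := continuousOn_hbar hC1 hu
  have hch := (continuousOn_slice hC1 hu).mono Ioi_subset_Ici_self
  have hne : ∀ s ∈ Ioi (0:ℝ), s ≠ 0 := fun s hs => ne_of_gt hs
  exact (((hch.sub hcb).pow 2).div continuousOn_id hne).mul (continuousOn_const.add
    ((continuousOn_const.mul ((continuous_sin.comp_continuousOn hcb).pow 2)).div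
      (continuousOn_id.pow 2) fun s hs => pow_ne_zero 2 (hne s hs)))

theorem XNormLe.abs_sub_le (hX : XNormLe h x)
    (hC1 : ContDiffOn ℝ 1 (fun p : ℝ × ℝ => h p.1 p.2) (Ici 0 ×ˢ Ici 0)) (hu : 0 ≤ u) {t r : ℝ}
    (ht : 0 ≤ t) (htr : t ≤ r) :
    |h u r - h u t| ≤ x / 2 * (((1 + u + t) ^ 2)⁻¹ - ((1 + u + r) ^ 2)⁻¹) := by
  have hpos : ∀ τ, 0 ≤ τ → 1 + u + τ ≠ 0 := fun τ hτ => by positivity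
  have hB : ∀ τ, 0 ≤ τ → HasDerivAt (fun τ => -(x / 2) * ((1 + u + τ) ^ 2)⁻¹)
      (x * ((1 + u + τ) ^ 3)⁻¹) τ := fun τ hτ => by
    refine ((((hasDerivAt_id' τ).const_add (1 + u)).fun_pow 2).fun_inv
      (pow_ne_zero 2 (hpos τ hτ))).const_mul (-(x / 2)) |>.congr_deriv ?_
    field_simp [hpos τ hτ]
    ring
  have hmain := abs_sub_le_sub_of_abs_hasDerivAt_le htr
    ((continuousOn_slice hC1 hu).mono fun τ hτ => ht.trans hτ.1)
    (HasDerivAt.continuousOn fun τ hτ => hB τ (ht.trans hτ.1))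
    (fun τ hτ => hasDerivAt_slice hC1 hu (ht.trans_lt hτ.1))
    (fun τ hτ => hB τ (ht.trans hτ.1.le))
    (fun τ hτ => hX.abs_deriv_le hu (ht.trans hτ.1.le))
  convert hmain using 1
  ring

theorem XNormLe.abs_sub_hbar_le (hX : XNormLe h x)
    (hC1 : ContDiffOn ℝ 1 (fun p : ℝ × ℝ => h p.1 p.2) (Ici 0 ×ˢ Ici 0)) (hu : 0 ≤ u) {r : ℝ}
    (hr : 0 < r) :
    |h u r - hbar h u r| ≤ x * r / (2 * (1 + u) * (1 + u + r) ^ 2) := by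
  have hsub : ∀ t ∈ uIcc 0 r, 0 ≤ t := fun t ht => (uIcc_of_le hr.le ▸ ht).1
  have hint : IntervalIntegrable (h u) volume 0 r :=
    ((continuousOn_slice hC1 hu).mono hsub).intervalIntegrable
  have hrepr : h u r - hbar h u r = r⁻¹ * ∫ t in (0:ℝ)..r, (h u r - h u t) := by
    rw [hbar, intervalIntegral.integral_sub intervalIntegrable_const hint,
      intervalIntegral.integral_const, smul_eq_mul]
    field_simp
    ring
  have hcont : ContinuousOn (fun t => x / 2 * (((1 + u + t) ^ 2)⁻¹ - ((1 + u + r) ^ 2)⁻¹))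
      (uIcc 0 r) := by
    refine continuousOn_const.mul ((ContinuousOn.inv₀ (f := fun t => (1 + u + t) ^ 2)
      (by fun_prop) fun t ht => ?_).sub continuousOn_const)
    have := hsub t ht
    positivity
  have hbound : ‖∫ t in (0:ℝ)..r, (h u r - h u t)‖ ≤
      ∫ t in (0:ℝ)..r, x / 2 * (((1 + u + t) ^ 2)⁻¹ - ((1 + u + r) ^ 2)⁻¹) :=
    intervalIntegral.norm_integral_le_of_norm_le hr.le
      (ae_of_all _ fun t ht => hX.abs_sub_le hC1 hu ht.1.le ht.2)
      (ContinuousOn.intervalIntegrable hcont)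
  rw [intervalIntegral.integral_const_mul, integral_inv_sq_sub_inv_sq (by linarith) hr.le]
    at hbound
  rw [hrepr, abs_mul, abs_inv, abs_of_pos hr, ← Real.norm_eq_abs]
  calc r⁻¹ * ‖∫ t in (0:ℝ)..r, (h u r - h u t)‖
      ≤ r⁻¹ * (x / 2 * (r ^ 2 / ((1 + u) * (1 + u + r) ^ 2))) := by gcongr
    _ = x * r / (2 * (1 + u) * (1 + u + r) ^ 2) := by field_simp

theorem gmetIntegrand_nonneg {s : ℝ} (hs : 0 < s) : 0 ≤ gmetIntegrand h u s := by
  unfold gmetIntegrand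
  positivity

theorem XNormLe.gmetIntegrand_le (hX : XNormLe h x)
    (hC1 : ContDiffOn ℝ 1 (fun p : ℝ × ℝ => h p.1 p.2) (Ici 0 ×ˢ Ici 0)) (hu : 0 ≤ u) {s : ℝ}
    (hs : 0 < s) (hsin : |sin (hbar h u s)| ≤ |h u s - hbar h u s|) :
    gmetIntegrand h u s ≤ (x ^ 2 + x ^ 4) * s / (4 * (1 + s + u) ^ 4 * (1 + u) ^ 2) := by
  set ε := x * s / (2 * (1 + u) * (1 + u + s) ^ 2) with hε_def
  have hx := hX.nonneg
  have hε : 2 * ε ^ 2 / s ^ 2 ≤ x ^ 2 := by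
    have h1 : (1:ℝ) ≤ (1 + u) ^ 2 * (1 + u + s) ^ 4 := one_le_mul_of_one_le_of_one_le
      (one_le_pow₀ (by linarith)) (one_le_pow₀ (by linarith))
    calc 2 * ε ^ 2 / s ^ 2 = x ^ 2 / (2 * ((1 + u) ^ 2 * (1 + u + s) ^ 4)) := by
          rw [hε_def]
          field_simp
      _ ≤ x ^ 2 / 1 := by gcongr; linarith
      _ = x ^ 2 := div_one _
  calc gmetIntegrand h u s ≤ ε ^ 2 / s * (1 + 2 * ε ^ 2 / s ^ 2) :=
        sq_div_mul_one_add_le hs hsin (hX.abs_sub_hbar_le hC1 hu hs)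
    _ ≤ ε ^ 2 / s * (1 + x ^ 2) := by gcongr
    _ = (x ^ 2 + x ^ 4) * s / (4 * (1 + s + u) ^ 4 * (1 + u) ^ 2) := by
          rw [hε_def]
          field_simp
          ring

theorem XNormLe.integrableOn_gmetIntegrand (hX : XNormLe h x)
    (hC1 : ContDiffOn ℝ 1 (fun p : ℝ × ℝ => h p.1 p.2) (Ici 0 ×ˢ Ici 0)) (hu : 0 ≤ u)
    (hsin : ∀ s, 0 < s → |sin (hbar h u s)| ≤ |h u s - hbar h u s|) {c : ℝ} (hc : 0 < c) :
    IntegrableOn (gmetIntegrand h u) (Ioi c) := by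
  have hmajorant : IntegrableOn (fun s => (x ^ 2 + x ^ 4) / 4 * s ^ (-3:ℝ)) (Ioi c) :=
    (integrableOn_Ioi_rpow_of_lt (by norm_num) hc).const_mul _
  have hmeas : AEStronglyMeasurable (gmetIntegrand h u) (volume.restrict (Ioi c)) :=
    ((continuousOn_gmetIntegrand hC1 hu).mono fun s (hs : c < s) => hc.trans hs)
      |>.aestronglyMeasurable measurableSet_Ioi
  refine hmajorant.mono' hmeas ?_
  filter_upwards [ae_restrict_mem measurableSet_Ioi] with s (hs : c < s)
  have hs0 : 0 < s := hc.trans hs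
  have hden : 4 * s ^ 4 * 1 ≤ 4 * (1 + s + u) ^ 4 * (1 + u) ^ 2 := by
    gcongr
    · linarith
    · exact one_le_pow₀ (by linarith)
  rw [Real.norm_eq_abs, abs_of_nonneg (gmetIntegrand_nonneg hs0)]
  calc gmetIntegrand h u s ≤ (x ^ 2 + x ^ 4) * s / (4 * (1 + s + u) ^ 4 * (1 + u) ^ 2) :=
        hX.gmetIntegrand_le hC1 hu hs0 (hsin s hs0)
    _ ≤ (x ^ 2 + x ^ 4) * s / (4 * s ^ 4 * 1) := by gcongr
    _ = (x ^ 2 + x ^ 4) / 4 * s ^ (-3:ℝ) := by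
          rw [rpow_neg hs0.le, show (3:ℝ) = (3:ℕ) by norm_num, rpow_natCast]
          field_simp

theorem XNormLe.hasDerivAt_gmet (hX : XNormLe h x)
    (hC1 : ContDiffOn ℝ 1 (fun p : ℝ × ℝ => h p.1 p.2) (Ici 0 ×ˢ Ici 0)) (hu : 0 ≤ u)
    (hsin : ∀ s, 0 < s → |sin (hbar h u s)| ≤ |h u s - hbar h u s|) {r : ℝ} (hr : 0 < r) :
    HasDerivAt (gmet α h u) (α * gmet α h u r * gmetIntegrand h u r) r := by
  have hG := hasDerivAt_setIntegral_Ioi (hX.integrableOn_gmetIntegrand hC1 hu hsin (half_pos hr))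
    (half_lt_self hr) ((continuousOn_gmetIntegrand hC1 hu).continuousAt (Ioi_mem_nhds hr))
  exact (hG.const_mul (-α)).exp.congr_deriv (by rw [gmet_eq_exp]; ring)

theorem gmet_le_one (hα : 0 ≤ α) {r : ℝ} (hr : 0 ≤ r) : gmet α h u r ≤ 1 := by
  rw [gmet_eq_exp, exp_le_one_iff]
  exact mul_nonpos_of_nonpos_of_nonneg (neg_nonpos.2 hα)
    (setIntegral_nonneg measurableSet_Ioi fun s hs => gmetIntegrand_nonneg (hr.trans_lt hs))

end Bondi

/-- **Radial derivative of the Bondi metric function `g`.** If `‖h‖_X ≤ x` and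
`|sin h̄| ≤ |h − h̄|` pointwise, then
`∂g/∂r = α g ((h−h̄)²/r)(1 + 2 sin²h̄/r²)`, and
`0 ≤ ∂g/∂r ≤ α(x²+x⁴)r/(4(1+r+u)⁴(1+u)²)`. -/
theorem gmet_deriv_formula_and_bound
    (α x : ℝ) (hα : 0 < α)
    (h : ℝ → ℝ → ℝ)
    (hC1 : ContDiffOn ℝ 1 (fun p : ℝ × ℝ => h p.1 p.2) (Set.Ici 0 ×ˢ Set.Ici 0))
    (hnorm : ∀ u : ℝ, 0 ≤ u → ∀ r : ℝ, 0 ≤ r →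
      (1 + r + u) ^ 2 * |h u r| +
        (1 + r + u) ^ 3 * |deriv (fun r' => h u r') r| ≤ x)
    (hsin : ∀ u : ℝ, 0 ≤ u → ∀ r : ℝ, 0 < r →
      |Real.sin (hbar h u r)| ≤ |h u r - hbar h u r|) :
    ∀ u : ℝ, 0 ≤ u → ∀ r : ℝ, 0 < r →
      deriv (fun r' => gmet α h u r') r =
        α * gmet α h u r * ((h u r - hbar h u r) ^ 2 / r) *
          (1 + 2 * Real.sin (hbar h u r) ^ 2 / r ^ 2) ∧
      0 ≤ deriv (fun r' => gmet α h u r') r ∧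
      deriv (fun r' => gmet α h u r') r ≤
        α * (x ^ 2 + x ^ 4) * r / (4 * (1 + r + u) ^ 4 * (1 + u) ^ 2) := by
  intro u hu r hr
  have hX : Bondi.XNormLe h x := hnorm
  have hderiv : deriv (gmet α h u) r = α * gmet α h u r * Bondi.gmetIntegrand h u r :=
    (hX.hasDerivAt_gmet hC1 hu (hsin u hu) hr).deriv
  have hF := Bondi.gmetIntegrand_nonneg (h := h) (u := u) hr
  refine ⟨by rw [hderiv, Bondi.gmetIntegrand, ← mul_assoc], ?_, ?_⟩
  · rw [hderiv]
    exact mul_nonneg (mul_nonneg hα.le (exp_pos _).le) hF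
  · calc deriv (gmet α h u) r = α * gmet α h u r * Bondi.gmetIntegrand h u r := hderiv
      _ ≤ α * 1 * Bondi.gmetIntegrand h u r := by gcongr; exact Bondi.gmet_le_one hα.le hr.le
      _ ≤ α * 1 * ((x ^ 2 + x ^ 4) * r / (4 * (1 + r + u) ^ 4 * (1 + u) ^ 2)) := by
          gcongr
          exact hX.gmetIntegrand_le hC1 hu hr (hsin u hu r hr)
      _ = α * (x ^ 2 + x ^ 4) * r / (4 * (1 + r + u) ^ 4 * (1 + u) ^ 2) := by ring

end
end

section
/- Let α > 0 and let h ∈ C¹([0,∞)×[0,∞)) have ‖h‖_X ≤ x, where ‖h‖_X = sup_{u,r≥0}[(1+r+u)²|h(u,r)| + (1+r+u)³|∂h/∂r(u,r)|], and assume |sin h̄(u,r)| ≤ |h(u,r) − h̄(u,r)| for all u ≥ 0, r > 0. Then the metric function g and its radial average ḡ(u,r) = (1/r)∫₀ʳ g(u,s) ds satisfy |g(u,r) − ḡ(u,r)| ≤ α(x² + x⁴)·r²/(12(1+u)³(1+r+u)³) for all u ≥ 0 and r > 0. -/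
/-!
Write `a = 1 + u`. Since `|∂ᵣh| ≤ x/(a+r)³`, the mean value theorem bounds `|h(r) − h(s)|` by the
increment of `−x/(2(a+·)²)`, and averaging over `s ∈ [0,r]` gives `|h − h̄| ≤ x r/(2a(a+r)²)`.
With `|sin h̄| ≤ |h − h̄|` the integrand of the exponent of `g` is then at most
`(x²+x⁴)/(4a²) · t/(a+t)⁴`. As `exp` is 1-Lipschitz on `(−∞, 0]`, `0 ≤ g(r) − g(s)` is at most
`α` times the integral of that majorant over `[s, r]`, and averaging once more over `s ∈ [0, r]`
leaves `∫₀ʳ t²/(a+t)⁴ dt = r³/(3a(a+r)³)`.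
-/

noncomputable section
open Real MeasureTheory Set

open Filter Topology

/-- `hbar h u = radialAvg (h u)` and `gbarm α h u = radialAvg (gmet α h u)` hold by `rfl`. -/
def radialAvg (f : ℝ → ℝ) (r : ℝ) : ℝ := (1 / r) * ∫ s in (0:ℝ)..r, f s

/-- The integrand in the exponent of `gmet α h u`, written for the slice `f = h u`. -/
def bondiIntegrand (f : ℝ → ℝ) (s : ℝ) : ℝ :=
  ((f s - radialAvg f s) ^ 2 / s) * (1 + 2 * sin (radialAvg f s) ^ 2 / s ^ 2)

theorem Real.exp_sub_exp_le_of_nonpos {p q : ℝ} (hpq : p ≤ q) (hq : q ≤ 0) :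
    exp q - exp p ≤ q - p := by
  have h1 : 1 + (p - q) ≤ exp (p - q) := by linarith [add_one_le_exp (p - q)]
  have h2 : exp q ≤ 1 := exp_le_one_iff.mpr hq
  have h3 : exp p = exp q * exp (p - q) := by rw [← exp_add]; ring_nf
  nlinarith [exp_pos q]

theorem DifferentiableOn.differentiableAt_uncurry_left {h : ℝ → ℝ → ℝ} {s T : Set ℝ} {u t : ℝ}
    (hD : DifferentiableOn ℝ (Function.uncurry h) (s ×ˢ T)) (hu : u ∈ s) (ht : T ∈ 𝓝 t) :
    DifferentiableAt ℝ (h u) t :=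
  ((hD (u, t) ⟨hu, mem_of_mem_nhds ht⟩).comp t
    ((differentiableAt_const u).prodMk differentiableAt_id).differentiableWithinAt
    fun _ hτ => ⟨hu, hτ⟩).differentiableAt ht

theorem abs_sub_le_sub_of_abs_deriv_le_s13 {f G G' : ℝ → ℝ} {a b : ℝ} (hab : a ≤ b)
    (hf : ContinuousOn f (Icc a b)) (hfd : ∀ t ∈ Ioo a b, DifferentiableAt ℝ f t)
    (hG : ∀ t ∈ Icc a b, HasDerivAt G (G' t) t) (hbound : ∀ t ∈ Ioo a b, |deriv f t| ≤ G' t) :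
    |f b - f a| ≤ G b - G a := by
  have hGc : ContinuousOn G (Icc a b) := fun t ht => (hG t ht).continuousAt.continuousWithinAt
  have key : ∀ σ : ℝ, |σ| ≤ 1 → σ * (f b - f a) ≤ G b - G a := by
    intro σ hσ
    have hmono : MonotoneOn (fun t => G t - σ * f t) (Icc a b) := by
      refine monotoneOn_of_deriv_nonneg (convex_Icc a b) (hGc.sub (hf.const_smul σ)) ?_ ?_
        <;> rw [interior_Icc] <;> intro t ht
      · exact ((hG t (Ioo_subset_Icc_self ht)).differentiableAt.sub
          ((hfd t ht).const_mul σ)).differentiableWithinAt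
      · have hd : HasDerivAt (fun t => G t - σ * f t) (G' t - σ * deriv f t) t :=
          (hG t (Ioo_subset_Icc_self ht)).sub ((hfd t ht).hasDerivAt.const_mul σ)
        rw [hd.deriv, sub_nonneg]
        calc σ * deriv f t ≤ |σ * deriv f t| := le_abs_self _
          _ = |σ| * |deriv f t| := abs_mul _ _
          _ ≤ |deriv f t| := mul_le_of_le_one_left (abs_nonneg _) hσ
          _ ≤ G' t := hbound t ht
    have := hmono (left_mem_Icc.mpr hab) (right_mem_Icc.mpr hab) hab
    simp only at this
    linarith
  rw [abs_sub_le_iff]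
  constructor
  · simpa using key 1 (by norm_num)
  · simpa using key (-1) (by norm_num)

theorem abs_sub_radialAvg_le {f G H : ℝ → ℝ} {t : ℝ} (ht : 0 < t)
    (hf : IntervalIntegrable f volume 0 t) (hG : IntervalIntegrable G volume 0 t)
    (hH : ∀ τ ∈ Icc 0 t, HasDerivAt H (G τ) τ) (hfG : ∀ τ ∈ Icc 0 t, |f t - f τ| ≤ G t - G τ) :
    |f t - radialAvg f t| ≤ G t - (H t - H 0) / t := by
  have hmean : ∀ φ : ℝ → ℝ, IntervalIntegrable φ volume 0 t →
      φ t - radialAvg φ t = (1 / t) * ∫ τ in (0:ℝ)..t, (φ t - φ τ) := by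
    intro φ hφ
    rw [intervalIntegral.integral_sub intervalIntegrable_const hφ, intervalIntegral.integral_const,
      radialAvg, smul_eq_mul, sub_zero]
    field_simp
  have hFTC : ∫ τ in (0:ℝ)..t, G τ = H t - H 0 :=
    intervalIntegral.integral_eq_sub_of_hasDerivAt (by rwa [uIcc_of_le ht.le]) hG
  calc |f t - radialAvg f t| = (1 / t) * |∫ τ in (0:ℝ)..t, (f t - f τ)| := by
        rw [hmean f hf, abs_mul, abs_of_pos (by positivity)]
    _ ≤ (1 / t) * ∫ τ in (0:ℝ)..t, (G t - G τ) := by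
        gcongr
        exact (intervalIntegral.abs_integral_le_integral_abs ht.le).trans
          (intervalIntegral.integral_mono_on ht.le (intervalIntegrable_const.sub hf).abs
            (intervalIntegrable_const.sub hG) hfG)
    _ = G t - (H t - H 0) / t := by
        rw [intervalIntegral.integral_sub intervalIntegrable_const hG,
          intervalIntegral.integral_const, hFTC, smul_eq_mul, sub_zero]
        field_simp

section Decay

variable {a : ℝ}

theorem hasDerivAt_inv_add_pow {t : ℝ} (n : ℕ) (h : a + t ≠ 0) :
    HasDerivAt (fun τ => ((a + τ) ^ n)⁻¹) (-n / (a + t) ^ (n + 1)) t := by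
  have hp : HasDerivAt (fun τ => (a + τ) ^ n) (n * (a + t) ^ (n - 1)) t := by
    simpa using ((hasDerivAt_id t).const_add a).fun_pow n
  refine (hp.inv (pow_ne_zero n h)).congr_deriv ?_
  rcases n with _ | n
  · simp
  · simp only [Nat.add_sub_cancel, Nat.cast_succ]
    field_simp
    ring

/-- A primitive of `t ↦ t / (a + t) ^ 4`. -/
def decayPrimitive (a τ : ℝ) : ℝ := a / 3 * ((a + τ) ^ 3)⁻¹ - 1 / 2 * ((a + τ) ^ 2)⁻¹

/-- A primitive of `decayPrimitive a`. -/
def decayPrimitive₂ (a τ : ℝ) : ℝ := 1 / 2 * ((a + τ) ^ 1)⁻¹ - a / 6 * ((a + τ) ^ 2)⁻¹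

theorem hasDerivAt_decayPrimitive {t : ℝ} (h : a + t ≠ 0) :
    HasDerivAt (decayPrimitive a) (t / (a + t) ^ 4) t := by
  refine (((hasDerivAt_inv_add_pow 3 h).const_mul (a / 3)).sub
    ((hasDerivAt_inv_add_pow 2 h).const_mul (1 / 2))).congr_deriv ?_
  field_simp
  ring

theorem hasDerivAt_decayPrimitive₂ {t : ℝ} (h : a + t ≠ 0) :
    HasDerivAt (decayPrimitive₂ a) (decayPrimitive a t) t := by
  refine (((hasDerivAt_inv_add_pow 1 h).const_mul (1 / 2)).sub
    ((hasDerivAt_inv_add_pow 2 h).const_mul (a / 6))).congr_deriv ?_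
  simp only [decayPrimitive]
  field_simp
  ring

theorem tendsto_decayPrimitive_atTop : Tendsto (decayPrimitive a) atTop (𝓝 0) := by
  have hinv : ∀ n : ℕ, n ≠ 0 → Tendsto (fun τ => ((a + τ) ^ n)⁻¹) atTop (𝓝 0) := fun n hn =>
    tendsto_inv_atTop_zero.comp ((tendsto_pow_atTop hn).comp (tendsto_atTop_add_const_left _ a
      tendsto_id))
  have h := ((hinv 3 (by norm_num)).const_mul (a / 3)).sub
    ((hinv 2 (by norm_num)).const_mul (1 / 2))
  rwa [mul_zero, mul_zero, sub_zero] at h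

theorem integrableOn_Ioi_div_add_pow_four (ha : 0 < a) :
    IntegrableOn (fun t => t / (a + t) ^ 4) (Ioi 0) :=
  integrableOn_Ioi_deriv_of_nonneg
    (hasDerivAt_decayPrimitive (by linarith)).continuousAt.continuousWithinAt
    (fun t ht => hasDerivAt_decayPrimitive (by linarith [mem_Ioi.mp ht]))
    (fun t ht => by have : 0 < t := ht; positivity) tendsto_decayPrimitive_atTop

end Decay

theorem abs_sub_radialAvg_le_of_abs_deriv_le {f : ℝ → ℝ} {a x t : ℝ} (ha : 0 < a) (ht : 0 < t)
    (hf : ContinuousOn f (Ici 0)) (hfd : ∀ τ, 0 < τ → DifferentiableAt ℝ f τ)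
    (hbound : ∀ τ, 0 < τ → |deriv f τ| ≤ x / (a + τ) ^ 3) :
    |f t - radialAvg f t| ≤ x * t / (2 * a * (a + t) ^ 2) := by
  have hpos : ∀ τ ∈ Icc 0 t, a + τ ≠ 0 := fun τ hτ => by linarith [hτ.1]
  have hG : ∀ τ ∈ Icc 0 t, HasDerivAt (fun σ => -(x / 2) * ((a + σ) ^ 2)⁻¹)
      (x / (a + τ) ^ 3) τ := fun τ hτ =>
    ((hasDerivAt_inv_add_pow 2 (hpos τ hτ)).const_mul _).congr_deriv (by push_cast; ring)
  have hH : ∀ τ ∈ Icc 0 t, HasDerivAt (fun σ => x / 2 * ((a + σ) ^ 1)⁻¹)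
      (-(x / 2) * ((a + τ) ^ 2)⁻¹) τ := fun τ hτ =>
    ((hasDerivAt_inv_add_pow 1 (hpos τ hτ)).const_mul _).congr_deriv (by push_cast; ring)
  have hfG : ∀ τ ∈ Icc 0 t,
      |f t - f τ| ≤ -(x / 2) * ((a + t) ^ 2)⁻¹ - -(x / 2) * ((a + τ) ^ 2)⁻¹ :=
    fun τ hτ => abs_sub_le_sub_of_abs_deriv_le_s13 hτ.2 (hf.mono fun σ hσ => hτ.1.trans hσ.1)
      (fun σ hσ => hfd σ (hτ.1.trans_lt hσ.1))
      (fun σ hσ => hG σ ⟨hτ.1.trans hσ.1, hσ.2⟩) (fun σ hσ => hbound σ (hτ.1.trans_lt hσ.1))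
  refine (abs_sub_radialAvg_le ht ((hf.mono Icc_subset_Ici_self).intervalIntegrable_of_Icc ht.le)
    (ContinuousOn.intervalIntegrable_of_Icc ht.le fun τ hτ =>
      (hG τ hτ).continuousAt.continuousWithinAt) hH hfG).trans_eq ?_
  have : a + t ≠ 0 := by linarith
  field_simp
  ring

theorem continuousOn_radialAvg {f : ℝ → ℝ} (hf : ContinuousOn f (Ici 0)) :
    ContinuousOn (radialAvg f) (Ioi 0) := by
  intro t (ht : 0 < t)
  have hprim := intervalIntegral.continuousOn_primitive_interval' (μ := volume)
    ((hf.mono Icc_subset_Ici_self).intervalIntegrable_of_Icc (by linarith : (0:ℝ) ≤ t + 1))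
    left_mem_uIcc
  have hnhds : uIcc (0:ℝ) (t + 1) ∈ 𝓝 t := by
    rw [uIcc_of_le (by linarith)]
    exact Icc_mem_nhds ht (by linarith)
  exact ((continuousAt_const.div continuousAt_id (ne_of_gt ht)).mul
    (hprim.continuousAt hnhds)).continuousWithinAt

theorem continuousOn_bondiIntegrand {f : ℝ → ℝ} (hf : ContinuousOn f (Ici 0)) :
    ContinuousOn (bondiIntegrand f) (Ioi 0) := by
  have hA := continuousOn_radialAvg hf
  have hf' := hf.mono Ioi_subset_Ici_self
  have hne : ∀ t ∈ Ioi (0:ℝ), t ≠ 0 := fun t ht => ne_of_gt ht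
  unfold bondiIntegrand
  exact (((hf'.sub hA).pow 2).div continuousOn_id hne).mul (continuousOn_const.add
    ((continuousOn_const.mul ((continuous_sin.comp_continuousOn hA).pow 2)).div
      (continuousOn_id.pow 2) fun t ht => pow_ne_zero 2 (hne t ht)))

theorem bondiIntegrand_nonneg (f : ℝ → ℝ) {t : ℝ} (ht : 0 ≤ t) : 0 ≤ bondiIntegrand f t := by
  unfold bondiIntegrand
  positivity

theorem bondiIntegrand_le {f : ℝ → ℝ} {a x t : ℝ} (ha : 1 ≤ a) (ht : 0 < t)
    (hdev : |f t - radialAvg f t| ≤ x * t / (2 * a * (a + t) ^ 2))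
    (hsin : |sin (radialAvg f t)| ≤ |f t - radialAvg f t|) :
    bondiIntegrand f t ≤ (x ^ 2 + x ^ 4) / (4 * a ^ 2) * (t / (a + t) ^ 4) := by
  have : a ≠ 0 := by linarith
  have : a + t ≠ 0 := by linarith
  set β := x * t / (2 * a * (a + t) ^ 2)
  have hD : (f t - radialAvg f t) ^ 2 ≤ β ^ 2 :=
    sq_le_sq' (neg_le_of_abs_le hdev) (le_of_abs_le hdev)
  have hS : sin (radialAvg f t) ^ 2 ≤ β ^ 2 := (sq_le_sq.mpr hsin).trans hD
  have hβ : 2 * β ^ 2 / t ^ 2 ≤ x ^ 2 := by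
    have h1 : 1 ≤ a ^ 2 * (a + t) ^ 4 :=
      one_le_mul_of_one_le_of_one_le (one_le_pow₀ ha) (one_le_pow₀ (by linarith))
    have h2 : 2 * β ^ 2 / t ^ 2 = x ^ 2 / (2 * (a ^ 2 * (a + t) ^ 4)) := by
      simp only [β]
      field_simp
    rw [h2]
    exact div_le_self (sq_nonneg x) (by linarith)
  calc bondiIntegrand f t ≤ β ^ 2 / t * (1 + 2 * β ^ 2 / t ^ 2) := by
        unfold bondiIntegrand
        gcongr ?_ / t * (1 + 2 * ?_ / t ^ 2)
    _ ≤ β ^ 2 / t * (1 + x ^ 2) := by gcongr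
    _ = (x ^ 2 + x ^ 4) / (4 * a ^ 2) * (t / (a + t) ^ 4) := by
        simp only [β]
        field_simp
        ring

section Tail

variable {F : ℝ → ℝ} {α s r : ℝ}

theorem integrableOn_Ioi_of_le_mul_div_add_pow_four {a c : ℝ} (ha : 0 < a)
    (hFcont : ContinuousOn F (Ioi 0)) (hF0 : ∀ t ∈ Ioi 0, 0 ≤ F t)
    (hFc : ∀ t ∈ Ioi 0, F t ≤ c * (t / (a + t) ^ 4)) : IntegrableOn F (Ioi 0) :=
  Integrable.mono' ((integrableOn_Ioi_div_add_pow_four ha).const_mul c)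
    (hFcont.aestronglyMeasurable measurableSet_Ioi)
    ((ae_restrict_iff' measurableSet_Ioi).mpr (ae_of_all _ fun t ht => by
      rw [Real.norm_eq_abs, abs_of_nonneg (hF0 t ht)]
      exact hFc t ht))

theorem exp_neg_mul_integral_Ioi_sub_mem_Icc (hα : 0 ≤ α) (hF : IntegrableOn F (Ioi s))
    (hF0 : ∀ t ∈ Ioi s, 0 ≤ F t) (hsr : s ≤ r) :
    exp (-α * ∫ t in Ioi r, F t) - exp (-α * ∫ t in Ioi s, F t) ∈
      Icc 0 (α * ∫ t in s..r, F t) := by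
  have hdiff := intervalIntegral.integral_Ioi_sub_Ioi hF hsr
  have hIoc : 0 ≤ ∫ t in s..r, F t := by
    rw [intervalIntegral.integral_of_le hsr]
    exact setIntegral_nonneg measurableSet_Ioc fun t ht => hF0 t ht.1
  have htail : 0 ≤ ∫ t in Ioi r, F t :=
    setIntegral_nonneg measurableSet_Ioi fun t ht => hF0 t (hsr.trans_lt ht)
  have hle : -α * ∫ t in Ioi s, F t ≤ -α * ∫ t in Ioi r, F t := by nlinarith
  refine ⟨sub_nonneg.mpr (exp_le_exp.mpr hle), ?_⟩
  calc _ ≤ -α * (∫ t in Ioi r, F t) - -α * ∫ t in Ioi s, F t :=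
        exp_sub_exp_le_of_nonpos hle (by nlinarith)
    _ = α * ∫ t in s..r, F t := by rw [← hdiff]; ring

theorem integral_le_mul_decayPrimitive_sub {a c : ℝ} (ha : 0 < a) (hs : 0 ≤ s) (hsr : s ≤ r)
    (hF : IntegrableOn F (Ioi 0)) (hFc : ∀ t ∈ Ioi 0, F t ≤ c * (t / (a + t) ^ 4)) :
    ∫ t in s..r, F t ≤ c * (decayPrimitive a r - decayPrimitive a s) := by
  have hsub : Ioc s r ⊆ Ioi 0 := fun t ht => hs.trans_lt ht.1
  have hderiv : ∀ t ∈ uIcc s r, HasDerivAt (decayPrimitive a) (t / (a + t) ^ 4) t := by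
    rw [uIcc_of_le hsr]
    exact fun t ht => hasDerivAt_decayPrimitive (by linarith [ht.1])
  have hφ := (integrableOn_Ioi_div_add_pow_four ha).mono_set hsub
  have hmaj : IntegrableOn (fun t => c * (t / (a + t) ^ 4)) (Ioc s r) := hφ.const_mul c
  calc ∫ t in s..r, F t ≤ ∫ t in s..r, c * (t / (a + t) ^ 4) := by
        rw [intervalIntegral.integral_of_le hsr, intervalIntegral.integral_of_le hsr]
        exact setIntegral_mono_on (hF.mono_set hsub) hmaj measurableSet_Ioc
          fun t ht => hFc t (hsub ht)
    _ = c * (decayPrimitive a r - decayPrimitive a s) := by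
        rw [intervalIntegral.integral_const_mul, intervalIntegral.integral_eq_sub_of_hasDerivAt
          hderiv ((intervalIntegrable_iff_integrableOn_Ioc_of_le hsr).mpr hφ)]

theorem abs_exp_neg_mul_integral_Ioi_sub_radialAvg_le {a c : ℝ} (hα : 0 ≤ α) (ha : 0 < a)
    (hr : 0 < r) (hFcont : ContinuousOn F (Ioi 0)) (hF0 : ∀ t ∈ Ioi 0, 0 ≤ F t)
    (hFc : ∀ t ∈ Ioi 0, F t ≤ c * (t / (a + t) ^ 4)) :
    |exp (-α * ∫ t in Ioi r, F t) - radialAvg (fun s => exp (-α * ∫ t in Ioi s, F t)) r| ≤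
      α * c * r ^ 2 / (3 * a * (a + r) ^ 3) := by
  have hF := integrableOn_Ioi_of_le_mul_div_add_pow_four ha hFcont hF0 hFc
  set g : ℝ → ℝ := fun s => exp (-α * ∫ t in Ioi s, F t)
  have hg : ∀ s ∈ Icc 0 r, ∀ s' ∈ Icc 0 r, s ≤ s' → g s' - g s ∈ Icc 0 (α * ∫ t in s..s', F t) :=
    fun s hs _ _ hss' => exp_neg_mul_integral_Ioi_sub_mem_Icc hα
      (hF.mono_set (Ioi_subset_Ioi hs.1)) (fun t ht => hF0 t (hs.1.trans_lt ht)) hss'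
  have hmono : MonotoneOn g (uIcc 0 r) := by
    rw [uIcc_of_le hr.le]
    exact fun s hs s' hs' hss' => sub_nonneg.mp (hg s hs s' hs' hss').1
  have hpos : ∀ τ ∈ Icc 0 r, a + τ ≠ 0 := fun τ hτ => by linarith [hτ.1]
  refine (abs_sub_radialAvg_le (G := fun τ => α * c * decayPrimitive a τ)
    (H := fun τ => α * c * decayPrimitive₂ a τ) hr hmono.intervalIntegrable
    (ContinuousOn.intervalIntegrable_of_Icc hr.le fun τ hτ =>
      ((hasDerivAt_decayPrimitive (hpos τ hτ)).continuousAt.const_mul _).continuousWithinAt)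
    (fun τ hτ => (hasDerivAt_decayPrimitive₂ (hpos τ hτ)).const_mul _) fun s hs => ?_).trans_eq ?_
  · obtain ⟨h0, h1⟩ := hg s hs r ⟨hr.le, le_rfl⟩ hs.2
    calc |g r - g s| = g r - g s := abs_of_nonneg h0
      _ ≤ α * ∫ t in s..r, F t := h1
      _ ≤ α * (c * (decayPrimitive a r - decayPrimitive a s)) := by
          gcongr
          exact integral_le_mul_decayPrimitive_sub ha hs.1 hs.2 hF hFc
      _ = _ := by ring
  · have : a + r ≠ 0 := by linarith
    have : a ≠ 0 := by linarith
    simp only [decayPrimitive, decayPrimitive₂]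
    field_simp
    ring

end Tail

/-- **Bound on the deviation of `g` from its radial average.** If `‖h‖_X ≤ x` and
`|sin h̄| ≤ |h − h̄|` pointwise, then
`|g(u,r) − ḡ(u,r)| ≤ α(x²+x⁴)r²/(12(1+u)³(1+r+u)³)`. -/
theorem gmet_sub_gbar_bound
    (α x : ℝ) (hα : 0 < α)
    (h : ℝ → ℝ → ℝ)
    (hC1 : ContDiffOn ℝ 1 (fun p : ℝ × ℝ => h p.1 p.2) (Set.Ici 0 ×ˢ Set.Ici 0))
    (hnorm : ∀ u : ℝ, 0 ≤ u → ∀ r : ℝ, 0 ≤ r →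
      (1 + r + u) ^ 2 * |h u r| +
        (1 + r + u) ^ 3 * |deriv (fun r' => h u r') r| ≤ x)
    (hsin : ∀ u : ℝ, 0 ≤ u → ∀ r : ℝ, 0 < r →
      |Real.sin (hbar h u r)| ≤ |h u r - hbar h u r|) :
    ∀ u : ℝ, 0 ≤ u → ∀ r : ℝ, 0 < r →
      |gmet α h u r - gbarm α h u r| ≤
        α * (x ^ 2 + x ^ 4) * r ^ 2 / (12 * (1 + u) ^ 3 * (1 + r + u) ^ 3) := by
  intro u hu r hr
  have hcont : ContinuousOn (h u) (Ici 0) := hC1.continuousOn.uncurry_left u hu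
  have hdiff : ∀ t, 0 < t → DifferentiableAt ℝ (h u) t := fun t ht =>
    (hC1.differentiableOn one_ne_zero).differentiableAt_uncurry_left hu (Ici_mem_nhds ht)
  have hderiv : ∀ t, 0 < t → |deriv (h u) t| ≤ x / (1 + u + t) ^ 3 := fun t ht => by
    rw [le_div_iff₀ (by positivity), show 1 + u + t = 1 + t + u by ring]
    nlinarith [hnorm u hu t ht.le, abs_nonneg (h u t)]
  have hdev : ∀ t, 0 < t → |h u t - hbar h u t| ≤ x * t / (2 * (1 + u) * (1 + u + t) ^ 2) :=
    fun t ht => abs_sub_radialAvg_le_of_abs_deriv_le (by linarith) ht hcont hdiff hderiv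
  refine (abs_exp_neg_mul_integral_Ioi_sub_radialAvg_le hα.le (by linarith) hr
    (continuousOn_bondiIntegrand hcont) (fun t ht => bondiIntegrand_nonneg _ (le_of_lt ht))
    fun t ht => bondiIntegrand_le (by linarith) ht (hdev t ht) (hsin u hu t ht)).trans_eq ?_
  have : 1 + u ≠ 0 := by linarith
  have : 1 + u + r ≠ 0 := by linarith
  field_simp
  ring
end
end

section
/- Let k ∈ (0,1], u' > 0, r' ≥ 0, and let r : [0,u'] → [0,∞) satisfy r(u) ≥ r' + (k/2)(u' − u) for all u ∈ [0,u']. Let t, q, s, m be positive integers with m + s ≤ q and t + q − s − m > 1. Then ∫₀^{u'} r(u)^s / ((1+u)^t (1+r(u)+u)^q) du ≤ 2^m / ((t+q−s−m−1)·k^m·(1+r'+u')^m). -/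
noncomputable section
open Real Set MeasureTheory

/-- **Weighted integral inequality along the characteristic.** If `k ∈ (0,1]` and
`r(u) ≥ r' + (k/2)(u'−u)` on `[0,u']`, then for positive integers `t,q,s,m` with
`m + s ≤ q` and `t + q − s − m > 1`,
`∫₀^{u'} r(u)^s/((1+u)^t (1+r(u)+u)^q) du ≤ 2^m/((t+q−s−m−1) k^m (1+r'+u')^m)`. -/
theorem characteristic_weighted_integral_inequality
    (k u' r' : ℝ) (hk0 : 0 < k) (hk1 : k ≤ 1) (hu' : 0 < u') (hr' : 0 ≤ r')
    (r : ℝ → ℝ) (hrc : Continuous r)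
    (hrpos : ∀ u ∈ Set.Icc (0:ℝ) u', 0 ≤ r u)
    (hrlow : ∀ u ∈ Set.Icc (0:ℝ) u', r' + (k / 2) * (u' - u) ≤ r u)
    (t q s m : ℕ) (ht : 0 < t) (hq : 0 < q) (hs : 0 < s) (hm : 0 < m)
    (hms : m + s ≤ q) (hgt : s + m + 1 < t + q) :
    ∫ u in (0:ℝ)..u', (r u) ^ s / ((1 + u) ^ t * (1 + r u + u) ^ q) ≤
      2 ^ m / (((t:ℝ) + q - s - m - 1) * k ^ m * (1 + r' + u') ^ m) := by
  set p : ℕ := t + q - s - m with hpdef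
  have hpsm : p + s + m = t + q := by omega
  have hp2 : 2 ≤ p := by omega
  have hpc : ((t:ℝ) + q - s - m - 1) = (p:ℝ) - 1 := by
    have : ((p:ℝ) + s + m) = (t:ℝ) + q := by exact_mod_cast congrArg (Nat.cast : ℕ → ℝ) hpsm
    linarith
  have hpR : (1:ℝ) < (p:ℝ) := by exact_mod_cast Nat.lt_of_lt_of_le one_lt_two hp2
  have hD : (0:ℝ) < 1 + r' + u' := by linarith
  set C : ℝ := 2 ^ m / (k ^ m * (1 + r' + u') ^ m) with hCdef
  have hCpos : 0 < C := by positivity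
  -- pointwise bound
  have key : ∀ u ∈ Set.Icc (0:ℝ) u',
      r u ^ s / ((1 + u) ^ t * (1 + r u + u) ^ q) ≤ C * (1 + u) ^ (-(p:ℝ)) := by
    intro u hu
    obtain ⟨hu0, huu⟩ := hu
    have hr0 : 0 ≤ r u := hrpos u ⟨hu0, huu⟩
    have hApos : (0:ℝ) < 1 + u := by linarith
    have hB : 1 + u ≤ 1 + r u + u := by linarith
    have hBpos : 0 < 1 + r u + u := by linarith
    have hrB : r u ≤ 1 + r u + u := by linarith
    have hBlow : k / 2 * (1 + r' + u') ≤ 1 + r u + u := by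
      have h1 := hrlow u ⟨hu0, huu⟩
      nlinarith [mul_nonneg (show (0:ℝ) ≤ 2 - k by linarith) hr',
        mul_nonneg (show (0:ℝ) ≤ 2 - k by linarith) hu0]
    have step1 : r u ^ s / ((1 + u) ^ t * (1 + r u + u) ^ q)
        ≤ 1 / ((1 + u) ^ p * (1 + r u + u) ^ m) := by
      rw [div_le_div_iff₀ (by positivity) (by positivity)]
      have e1 : (1 + u) ^ p = (1 + u) ^ t * (1 + u) ^ (q - s - m) := by
        rw [← pow_add]; congr 1; omega
      have e2 : (1 + r u + u) ^ s * (1 + r u + u) ^ (q - s - m) * (1 + r u + u) ^ m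
          = (1 + r u + u) ^ q := by
        rw [← pow_add, ← pow_add]; congr 1; omega
      have h1 : r u ^ s ≤ (1 + r u + u) ^ s := pow_le_pow_left₀ hr0 hrB s
      have h2 : (1 + u) ^ (q - s - m) ≤ (1 + r u + u) ^ (q - s - m) :=
        pow_le_pow_left₀ hApos.le hB _
      calc r u ^ s * ((1 + u) ^ p * (1 + r u + u) ^ m)
          = (r u ^ s * (1 + u) ^ (q - s - m)) * ((1 + u) ^ t * (1 + r u + u) ^ m) := by
            rw [e1]; ring
        _ ≤ ((1 + r u + u) ^ s * (1 + r u + u) ^ (q - s - m))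
              * ((1 + u) ^ t * (1 + r u + u) ^ m) := by
            apply mul_le_mul_of_nonneg_right
              (mul_le_mul h1 h2 (by positivity) (by positivity)) (by positivity)
        _ = 1 * ((1 + u) ^ t
              * ((1 + r u + u) ^ s * (1 + r u + u) ^ (q - s - m) * (1 + r u + u) ^ m)) := by
            ring
        _ = 1 * ((1 + u) ^ t * (1 + r u + u) ^ q) := by rw [e2]
    have hrp : C * (1 + u) ^ (-(p:ℝ))
        = 2 ^ m / (k ^ m * (1 + r' + u') ^ m * (1 + u) ^ p) := by
      rw [rpow_neg hApos.le, rpow_natCast, hCdef, ← div_eq_mul_inv, div_div]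
    refine step1.trans ?_
    rw [hrp, div_le_div_iff₀ (by positivity) (by positivity)]
    have h3 : (k / 2 * (1 + r' + u')) ^ m ≤ (1 + r u + u) ^ m :=
      pow_le_pow_left₀ (by positivity) hBlow m
    have h3' : k ^ m * (1 + r' + u') ^ m ≤ 2 ^ m * (1 + r u + u) ^ m := by
      rw [mul_pow, div_pow] at h3
      rw [div_mul_eq_mul_div, div_le_iff₀ (by positivity : (0:ℝ) < (2:ℝ) ^ m)] at h3
      linarith [h3]
    nlinarith [mul_le_mul_of_nonneg_right h3' (pow_pos hApos p).le,
      pow_pos hApos p, pow_pos hBpos m]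
  -- integrability
  have hcont1 : ContinuousOn
      (fun u => r u ^ s / ((1 + u) ^ t * (1 + r u + u) ^ q)) (Set.uIcc 0 u') := by
    rw [Set.uIcc_of_le hu'.le]
    apply ContinuousOn.div
    · exact (hrc.pow s).continuousOn
    · exact (((continuous_const.add continuous_id).pow t).mul
        (((continuous_const.add hrc).add continuous_id).pow q)).continuousOn
    · intro x hx
      have h0 := hrpos x hx
      have h1 : (0:ℝ) < 1 + x := by linarith [hx.1]
      have h2 : (0:ℝ) < 1 + r x + x := by linarith [hx.1]
      positivity
  have hcont2 : ContinuousOn (fun u : ℝ => C * (1 + u) ^ (-(p:ℝ))) (Set.uIcc 0 u') := by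
    rw [Set.uIcc_of_le hu'.le]
    apply ContinuousOn.mul continuousOn_const
    apply ContinuousOn.rpow_const (continuous_const.add continuous_id).continuousOn
    intro x hx
    left
    have : (0:ℝ) < 1 + x := by linarith [hx.1]
    exact ne_of_gt this
  have hint1 : IntervalIntegrable (fun u => r u ^ s / ((1 + u) ^ t * (1 + r u + u) ^ q))
      volume 0 u' := hcont1.intervalIntegrable
  have hint2 : IntervalIntegrable (fun u : ℝ => C * (1 + u) ^ (-(p:ℝ))) volume 0 u' :=
    hcont2.intervalIntegrable
  have mono := intervalIntegral.integral_mono_on hu'.le hint1 hint2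
    key
  -- compute the rpow integral
  have hcomp : ∫ u in (0:ℝ)..u', (1 + u) ^ (-(p:ℝ))
      = ∫ x in (1:ℝ)..(1 + u'), x ^ (-(p:ℝ)) := by
    have := intervalIntegral.integral_comp_add_left (a := (0:ℝ)) (b := u')
      (fun x : ℝ => x ^ (-(p:ℝ))) 1
    simpa using this
  have hval : ∫ x in (1:ℝ)..(1 + u'), x ^ (-(p:ℝ))
      = ((1 + u') ^ (-(p:ℝ) + 1) - 1 ^ (-(p:ℝ) + 1)) / (-(p:ℝ) + 1) := by
    apply integral_rpow
    right
    constructor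
    · intro h; rw [neg_eq_iff_eq_neg] at h; exact absurd h (by norm_num; linarith)
    · rw [Set.uIcc_of_le (by linarith : (1:ℝ) ≤ 1 + u')]
      intro h
      exact absurd h.1 (by norm_num)
  have hXnn : (0:ℝ) ≤ (1 + u') ^ (-(p:ℝ) + 1) := rpow_nonneg (by linarith) _
  have hbound : ((1 + u') ^ (-(p:ℝ) + 1) - 1 ^ (-(p:ℝ) + 1)) / (-(p:ℝ) + 1)
      ≤ 1 / ((p:ℝ) - 1) := by
    rw [Real.one_rpow]
    have heq : ((1 + u') ^ (-(p:ℝ) + 1) - 1) / (-(p:ℝ) + 1)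
        = (1 - (1 + u') ^ (-(p:ℝ) + 1)) / ((p:ℝ) - 1) := by
      rw [div_eq_div_iff (by linarith) (by linarith)]; ring
    rw [heq]
    apply div_le_div_of_nonneg_right ?_ (by linarith)
    · linarith
  have hintval : ∫ u in (0:ℝ)..u', C * (1 + u) ^ (-(p:ℝ)) ≤ C * (1 / ((p:ℝ) - 1)) := by
    rw [intervalIntegral.integral_const_mul, hcomp, hval]
    exact mul_le_mul_of_nonneg_left hbound hCpos.le
  have final : C * (1 / ((p:ℝ) - 1))
      = 2 ^ m / (((t:ℝ) + q - s - m - 1) * k ^ m * (1 + r' + u') ^ m) := by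
    rw [hpc, hCdef]
    rw [div_mul_div_comm, mul_one, mul_comm (k ^ m * (1 + r' + u') ^ m) ((p:ℝ) - 1),
      ← mul_assoc]
  calc ∫ u in (0:ℝ)..u', r u ^ s / ((1 + u) ^ t * (1 + r u + u) ^ q)
      ≤ ∫ u in (0:ℝ)..u', C * (1 + u) ^ (-(p:ℝ)) := mono
    _ ≤ C * (1 / ((p:ℝ) - 1)) := hintval
    _ = _ := final

end
end
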